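/- arXiv:2304.13173 — 9 statements merged into one kernel-verified Lean document; each statement's English description precedes it below -/
import Mathlib

section
/- Let t be a natural number, let Λ be a group, let Δ be a normal subgroup of Λ, and let X ⊆ Λ be a symmetric subset (X = X⁻¹) containing the identity such that the subgroup generated by X equals the set product X·Δ. If T is a maximal (Δ, Δ ∩ X)-separating set of size t, then Δ ⊆ X^{2·6^t}, i.e. every element of Δ is a product of 2·6^t elements of X. -/
open Pointwise

/-- A `(Δ, Y)`-separating set: a subset `T` of `Δ` containing the identity such that
for every two distinct `t₁, t₂ ∈ T` the translates `t₁ • Y` and `t₂ • Y` are disjoint. -/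
def IsSeparatingSet {Λ : Type*} [Group Λ] (Δ : Subgroup Λ) (Y : Set Λ) (T : Set Λ) : Prop :=
  T ⊆ (Δ : Set Λ) ∧ (1 : Λ) ∈ T ∧
    ∀ t₁ ∈ T, ∀ t₂ ∈ T, t₁ ≠ t₂ → Disjoint (t₁ • Y) (t₂ • Y)

theorem stmt0 {Λ : Type*} [Group Λ] (t : ℕ) (Δ : Subgroup Λ) (hΔ : Δ.Normal)
    (X : Set Λ) (hXsym : X⁻¹ = X) (hX1 : (1 : Λ) ∈ X)
    (hXgen : ((Subgroup.closure X : Subgroup Λ) : Set Λ) = X * (Δ : Set Λ))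
    (T : Set Λ) (hTsep : IsSeparatingSet Δ ((Δ : Set Λ) ∩ X) T)
    (hTmax : ∀ T' : Set Λ, IsSeparatingSet Δ ((Δ : Set Λ) ∩ X) T' → T ⊆ T' → T' = T)
    (hTfin : T.Finite) (hTcard : T.ncard = t) :
    (Δ : Set Λ) ⊆ X ^ (2 * 6 ^ t) := by
  have hXinv : ∀ a ∈ X, a⁻¹ ∈ X := fun a ha => hXsym ▸ Set.inv_mem_inv.mpr ha
  have hXninv : ∀ (n : ℕ), ∀ a ∈ X ^ n, a⁻¹ ∈ X ^ n := by
    intro n a ha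
    have h1 : a⁻¹ ∈ (X ^ n)⁻¹ := Set.inv_mem_inv.mpr ha
    rwa [← inv_pow, hXsym] at h1
  -- covering from maximality
  have hcover : ∀ δ : Λ, δ ∈ Δ → ∃ τ ∈ T, τ⁻¹ * δ ∈ X ^ 2 := by
    intro δ hδ
    by_cases hδT : δ ∈ T
    · exact ⟨δ, hδT, by rw [inv_mul_cancel]; exact Set.one_mem_pow hX1⟩
    · have hnot : ¬ IsSeparatingSet Δ ((Δ : Set Λ) ∩ X) (insert δ T) := by
        intro h
        exact hδT ((hTmax _ h (Set.subset_insert _ _)) ▸ Set.mem_insert δ T)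
      unfold IsSeparatingSet at hnot
      push_neg at hnot
      obtain ⟨t₁, ht₁, t₂, ht₂, hne, hnd⟩ :=
        hnot (Set.insert_subset hδ hTsep.1) (Set.mem_insert_of_mem _ hTsep.2.1)
      rw [Set.not_disjoint_iff] at hnd
      obtain ⟨w, hw₁, hw₂⟩ := hnd
      have key : ∀ a ∈ T, ∀ w : Λ, w ∈ a • ((Δ : Set Λ) ∩ X) → w ∈ δ • ((Δ : Set Λ) ∩ X) →
          ∃ τ ∈ T, τ⁻¹ * δ ∈ X ^ 2 := by
        intro a ha w hwa hwd
        obtain ⟨y₁, hy₁, rfl⟩ := hwa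
        obtain ⟨y₂, hy₂, heq⟩ := hwd
        refine ⟨a, ha, ?_⟩
        have heq' : δ * y₂ = a * y₁ := heq
        have h2 : a⁻¹ * δ = y₁ * y₂⁻¹ := by
          apply mul_right_cancel (b := y₂)
          rw [mul_assoc, heq', inv_mul_cancel_left, mul_assoc, inv_mul_cancel, mul_one]
        rw [h2, pow_two]
        exact Set.mul_mem_mul hy₁.2 (hXinv _ hy₂.2)
      rcases Set.mem_insert_iff.mp ht₁ with h₁ | h₁
      · rcases Set.mem_insert_iff.mp ht₂ with h₂ | h₂
        · exact absurd (h₁.trans h₂.symm) hne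
        · exact key t₂ h₂ w hw₂ (h₁ ▸ hw₁)
      · rcases Set.mem_insert_iff.mp ht₂ with h₂ | h₂
        · exact key t₁ h₁ w hw₁ (h₂ ▸ hw₂)
        · exact absurd (hTsep.2.2 t₁ h₁ t₂ h₂ hne) (Set.not_disjoint_iff.mpr ⟨w, hw₁, hw₂⟩)
  -- the set Z = Δ ∩ X³ generates Δ
  set Z : Set Λ := (Δ : Set Λ) ∩ X ^ 3 with hZdef
  have hZΔ : ∀ m : ℕ, Z ^ m ⊆ (Δ : Set Λ) := by
    intro m
    induction m with
    | zero => rw [pow_zero]; exact Set.one_subset.mpr Δ.one_mem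
    | succ m ih =>
      rw [pow_succ]
      rintro _ ⟨a, ha, b, hb, rfl⟩
      exact Δ.mul_mem (ih ha) hb.1
  have hgen : ∀ δ : Λ, δ ∈ Δ → ∃ m : ℕ, δ ∈ Z ^ m := by
    intro δ hδ
    have hδX : δ ∈ Subgroup.closure X := by
      have h1 : δ ∈ X * (Δ : Set Λ) := ⟨1, hX1, δ, hδ, one_mul δ⟩
      rw [← hXgen] at h1
      exact h1
    have step : ∀ g : Λ, (∃ m : ℕ, ∃ d ∈ Z ^ m, ∃ x ∈ X, g = d * x) → ∀ y ∈ X,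
        ∃ m : ℕ, ∃ d ∈ Z ^ m, ∃ x ∈ X, g * y = d * x := by
      rintro g ⟨m, d, hd, x, hx, rfl⟩ y hy
      have hxy : x * y ∈ X * (Δ : Set Λ) := by
        rw [← hXgen]
        exact mul_mem (Subgroup.subset_closure hx) (Subgroup.subset_closure hy)
      obtain ⟨x', hx', δ', hδ', hxyeq0⟩ := hxy
      have hxyeq : x' * δ' = x * y := hxyeq0
      have hz : x' * δ' * x'⁻¹ ∈ Z := by
        refine ⟨hΔ.conj_mem δ' hδ' x', ?_⟩
        have h3 : x' * δ' * x'⁻¹ = x * y * x'⁻¹ := by rw [hxyeq]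
        rw [h3, show (3 : ℕ) = 2 + 1 by rfl, pow_succ, pow_two]
        exact Set.mul_mem_mul (Set.mul_mem_mul hx hy) (hXinv _ hx')
      refine ⟨m + 1, d * (x' * δ' * x'⁻¹), ?_, x', hx', ?_⟩
      · rw [pow_succ]; exact Set.mul_mem_mul hd hz
      · have : d * x * y = d * (x' * δ') := by rw [hxyeq, ← mul_assoc]
        rw [this]; group
    have Q : ∃ m : ℕ, ∃ d ∈ Z ^ m, ∃ x ∈ X, δ = d * x := by
      refine Subgroup.closure_induction_right ?_ ?_ ?_ hδX
      · exact ⟨0, 1, Set.one_mem_one, 1, hX1, by rw [mul_one]⟩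
      · intro g _ y hy hQ; exact step g hQ y hy
      · intro g _ y hy hQ; exact step g hQ y⁻¹ (hXinv _ hy)
    obtain ⟨m, d, hd, x, hx, heq⟩ := Q
    have hxΔ : x ∈ Δ := by
      have : x = d⁻¹ * δ := by rw [heq]; group
      rw [this]
      exact Δ.mul_mem (Δ.inv_mem (hZΔ m hd)) hδ
    have hxZ : x ∈ Z := ⟨hxΔ, Set.pow_subset_pow_right (m := 1) (n := 3) hX1 (by norm_num) (by rwa [pow_one])⟩
    exact ⟨m + 1, by rw [heq, pow_succ]; exact Set.mul_mem_mul hd hxZ⟩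
  -- pigeonhole: stabilization of T ∩ X^(2*6^i)
  have hpig : ∃ i : ℕ, i < t ∧ T ∩ X ^ (2 * 6 ^ i) = T ∩ X ^ (2 * 6 ^ (i + 1)) := by
    by_contra hc
    push_neg at hc
    have hmono : ∀ i : ℕ, T ∩ X ^ (2 * 6 ^ i) ⊆ T ∩ X ^ (2 * 6 ^ (i + 1)) := by
      intro i
      refine Set.inter_subset_inter_right _ (Set.pow_subset_pow_right hX1 ?_)
      have : (6:ℕ) ^ i ≤ 6 ^ (i+1) := Nat.pow_le_pow_right (by norm_num) (Nat.le_succ i)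
      omega
    have hcard : ∀ i : ℕ, i ≤ t → i + 1 ≤ (T ∩ X ^ (2 * 6 ^ i)).ncard := by
      intro i
      induction i with
      | zero =>
        intro _
        have hne : (T ∩ X ^ (2 * 6 ^ 0)).Nonempty := ⟨1, hTsep.2.1, Set.one_mem_pow hX1⟩
        have := (Set.ncard_pos (hTfin.inter_of_left _)).mpr hne
        omega
      | succ i ih =>
        intro hit
        have h1 := ih (by omega)
        have hlt : (T ∩ X ^ (2 * 6 ^ i)).ncard < (T ∩ X ^ (2 * 6 ^ (i + 1))).ncard :=
          Set.ncard_lt_ncard (ssubset_of_subset_of_ne (hmono i) (hc i (by omega)))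
            (hTfin.inter_of_left _)
        omega
    have hle : (T ∩ X ^ (2 * 6 ^ t)).ncard ≤ t :=
      hTcard ▸ Set.ncard_le_ncard Set.inter_subset_left hTfin
    have := hcard t le_rfl
    omega
  obtain ⟨i, hit, hstab⟩ := hpig
  set k : ℕ := 2 * 6 ^ i with hkdef
  have hk2 : 2 ≤ k := by
    have : (1:ℕ) ≤ 6 ^ i := Nat.one_le_pow _ _ (by norm_num)
    omega
  have hstab' : T ∩ X ^ k = T ∩ X ^ (6 * k) := by
    rw [hstab]
    congr 2
    rw [hkdef]; ring
  have hZpow : ∀ m : ℕ, Z ^ m ⊆ X ^ (3 * k) := by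
    intro m
    induction m with
    | zero => rw [pow_zero]; exact Set.one_subset.mpr (Set.one_mem_pow hX1)
    | succ m ih =>
      rw [pow_succ]
      rintro _ ⟨δ, hδm, z, hz, rfl⟩
      have hδzΔ : δ * z ∈ Δ := Δ.mul_mem (hZΔ m hδm) hz.1
      obtain ⟨τ, hτT, hτ2⟩ := hcover _ hδzΔ
      have hτmem : τ ∈ X ^ (6 * k) := by
        have h1 : δ * z ∈ X ^ (3 * k) * X ^ 3 := Set.mul_mem_mul (ih hδm) hz.2
        rw [← pow_add] at h1
        have h2 : (τ⁻¹ * (δ * z))⁻¹ ∈ X ^ 2 := hXninv 2 _ hτ2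
        have h3 : τ = (δ * z) * (τ⁻¹ * (δ * z))⁻¹ := by group
        have h4 : τ ∈ X ^ (3 * k + 3) * X ^ 2 := h3 ▸ Set.mul_mem_mul h1 h2
        rw [← pow_add] at h4
        exact Set.pow_subset_pow_right hX1 (by omega) h4
      have hτk : τ ∈ X ^ k := by
        have h5 : τ ∈ T ∩ X ^ (6 * k) := ⟨hτT, hτmem⟩
        rw [← hstab'] at h5
        exact h5.2
      have h6 : δ * z = τ * (τ⁻¹ * (δ * z)) := by group
      have h7 : δ * z ∈ X ^ k * X ^ 2 := h6 ▸ Set.mul_mem_mul hτk hτ2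
      rw [← pow_add] at h7
      exact Set.pow_subset_pow_right hX1 (by omega) h7
  intro δ hδ
  obtain ⟨m, hm⟩ := hgen δ hδ
  have hfin : 3 * k ≤ 2 * 6 ^ t := by
    have h1 : 3 * k = 6 ^ (i + 1) := by rw [hkdef]; ring
    have h2 : (6:ℕ) ^ (i + 1) ≤ 6 ^ t := Nat.pow_le_pow_right (by norm_num) (by omega)
    omega
  exact Set.pow_subset_pow_right hX1 hfin (hZpow m hm)
end

section
/- Let r ∈ ℕ, let Γ be a group, let w be a word on k letters, and let 𝒩 be a nonprincipal ultrafilter on ℕ. Assume that for every n ∈ ℕ, Δₙ and Λₙ are subgroups of Γ with Δₙ normal in Λₙ, Δₙ contained in the verbal subgroup (Λₙ)_w, and width_w(Λₙ/Δₙ) ≤ r. Let Γ* be the ultrapower of Γ over 𝒩 and let Λ* and Δ* be the ultraproducts of the Λₙ's and the Δₙ's inside Γ*. Then the index [Δ* : (Λ*)_w ∩ Δ*] is finite if and only if there exists s ∈ ℕ such that {n ∈ ℕ : width_w(Λₙ) ≤ s} ∈ 𝒩. -/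
/-!
By Łoś's theorem for the verbal subset, `(Λ*)_w` consists of the germs of sequences whose
`w`-length in `Λₙ` is bounded along `𝒩`. If the widths of the `Λₙ` are bounded along `𝒩`, then
`Δ* ≤ (Λ*)_w` because `Δₙ ≤ (Λₙ)_w`, and the index is `1`.

If not, take a shortest product of values of `w` for an element of `(Λₙ)_w` of length `> t`:
its prefix of `t` factors has length exactly `t`, and since `Λₙ/Δₙ` has width `≤ r` it can be
corrected by at most `r` factors into an element of `Δₙ` of length within `r` of `t`.
Choosing lengths `j·cₙ` with `cₙ → ∞` along the nonprincipal `𝒩` yields `d_j ∈ Δ*` such that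
`d_i⁻¹ d_j` has length at least `(j - i)·cₙ - 2r`, unbounded along `𝒩`, so the `d_j` lie in
pairwise distinct cosets of `(Λ*)_w`.
-/

open Pointwise

/-- The verbal subset of a word `w` on `k` letters in a group `G`:
all values `w(g₁,…,g_k)^{±1}`. -/
def wordSet {k : ℕ} (w : FreeGroup (Fin k)) (G : Type*) [Group G] : Set G :=
  {x | ∃ g : Fin k → G, x = FreeGroup.lift g w ∨ x = (FreeGroup.lift g w)⁻¹}

/-- `widthLE w G s` : every element of the verbal subgroup `G_w` is a product of
at most `s` elements of the verbal subset `w(G)` (note `1 ∈ w(G)`). -/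
def widthLE {k : ℕ} (w : FreeGroup (Fin k)) (G : Type*) [Group G] (s : ℕ) : Prop :=
  ((Subgroup.closure (wordSet w G) : Subgroup G) : Set G) ⊆ wordSet w G ^ s

/-- The verbal subgroup of a subgroup `H ≤ G` relative to the word `w`, as a subgroup
of `G`: generated by the values of `w` on tuples from `H`. -/
def verbalIn {k : ℕ} {G : Type*} [Group G] (w : FreeGroup (Fin k)) (H : Subgroup G) :
    Subgroup G :=
  Subgroup.closure {x | ∃ g : Fin k → G, (∀ i, g i ∈ H) ∧ x = FreeGroup.lift g w}

/-- The ultraproduct of a sequence of subgroups `H n ≤ Γ` inside the ultrapower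
(the group of germs) of `Γ` along an ultrafilter `𝒩`. -/
def ultraSubgroup {Γ : Type*} [Group Γ] (𝒩 : Ultrafilter ℕ) (H : ℕ → Subgroup Γ) :
    Subgroup ((𝒩 : Filter ℕ).Germ Γ) where
  carrier := {x | ∃ f : ℕ → Γ, (∀ᶠ n in (𝒩 : Filter ℕ), f n ∈ H n) ∧
    x = Filter.Germ.ofFun f}
  one_mem' := ⟨1, Filter.Eventually.of_forall fun n => one_mem _,
    (Filter.Germ.coe_one (l := (𝒩 : Filter ℕ))).symm⟩
  mul_mem' := by
    rintro x y ⟨f, hf, rfl⟩ ⟨g, hg, rfl⟩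
    refine ⟨f * g, ?_, (Filter.Germ.coe_mul f g).symm⟩
    filter_upwards [hf, hg] with n h1 h2 using mul_mem h1 h2
  inv_mem' := by
    rintro x ⟨f, hf, rfl⟩
    refine ⟨f⁻¹, ?_, (Filter.Germ.coe_inv f).symm⟩
    filter_upwards [hf] with n h using inv_mem h


section WordLength

variable {G H : Type*} [Group G] [Group H]

theorem Subgroup.mem_closure_iff_exists_mem_pow {S : Set G} (hS : S⁻¹ = S) {x : G} :
    x ∈ Subgroup.closure S ↔ ∃ n : ℕ, x ∈ S ^ n := by
  refine ⟨fun hx => ?_, fun ⟨n, hn⟩ => Subgroup.pow_subset Subgroup.subset_closure hn⟩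
  induction hx using Subgroup.closure_induction with
  | mem y hy => exact ⟨1, by rwa [pow_one]⟩
  | one => exact ⟨0, Set.mem_one.2 rfl⟩
  | mul a b _ _ iha ihb =>
    obtain ⟨m, ha⟩ := iha
    obtain ⟨n, hb⟩ := ihb
    exact ⟨m + n, by rw [pow_add]; exact Set.mul_mem_mul ha hb⟩
  | inv a _ iha =>
    obtain ⟨n, ha⟩ := iha
    exact ⟨n, by rwa [← Set.mem_inv, ← inv_pow, hS]⟩

/-- Take a prefix of a shortest product representing `x`. -/
theorem Set.exists_mem_pow_forall_lt_notMem_pow {M : Type*} [Monoid M] {S : Set M}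
    (hS : 1 ∈ S) {x : M} {N t : ℕ} (hx : x ∈ S ^ N) (hxt : x ∉ S ^ t) :
    ∃ p ∈ S ^ t, ∀ j < t, p ∉ S ^ j := by
  classical
  have hex : ∃ n, x ∈ S ^ n := ⟨N, hx⟩
  have htn : t < Nat.find hex := lt_of_not_ge fun h =>
    hxt (Set.pow_subset_pow_right hS h (Nat.find_spec hex))
  have hsplit : x ∈ S ^ t * S ^ (Nat.find hex - t) := by
    rw [← pow_add, Nat.add_sub_cancel' htn.le]
    exact Nat.find_spec hex
  obtain ⟨p, hp, q, hq, rfl⟩ := hsplit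
  refine ⟨p, hp, fun j hj hpj => Nat.find_min hex (m := j + (Nat.find hex - t)) (by omega) ?_⟩
  rw [pow_add]
  exact Set.mul_mem_mul hpj hq

variable {k : ℕ} (w : FreeGroup (Fin k))

theorem MonoidHom.map_freeGroupLift (f : G →* H) (g : Fin k → G) :
    f (FreeGroup.lift g w) = FreeGroup.lift (f ∘ g) w :=
  FreeGroup.lift_unique (f.comp (FreeGroup.lift g)) (by simp)

theorem one_mem_wordSet : (1 : G) ∈ wordSet w G :=
  ⟨1, Or.inl (by rw [FreeGroup.ext_hom (FreeGroup.lift 1) 1 fun _ => by simp]; rfl)⟩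

theorem wordSet_inv : (wordSet w G)⁻¹ = wordSet w G := by
  ext x
  simp only [wordSet, Set.mem_inv, Set.mem_ofPred_eq, inv_eq_iff_eq_inv, inv_inv, or_comm]

theorem widthLE_mono {s t : ℕ} (hst : s ≤ t) (hs : widthLE w G s) : widthLE w G t :=
  hs.trans (Set.pow_subset_pow_right (one_mem_wordSet w) hst)

theorem image_wordSet_of_surjective {f : G →* H} (hf : Function.Surjective f) :
    f '' wordSet w G = wordSet w H := by
  ext x
  constructor
  · rintro ⟨y, ⟨g, rfl | rfl⟩, rfl⟩
    · exact ⟨f ∘ g, Or.inl (f.map_freeGroupLift w g)⟩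
    · exact ⟨f ∘ g, Or.inr (by rw [map_inv, f.map_freeGroupLift])⟩
  · rintro ⟨g, hx⟩
    obtain ⟨g', rfl⟩ : ∃ g', f ∘ g' = g := ⟨_, funext fun i => (hf (g i)).choose_spec⟩
    rcases hx with rfl | rfl
    · exact ⟨_, ⟨g', Or.inl rfl⟩, f.map_freeGroupLift w g'⟩
    · exact ⟨_, ⟨g', Or.inr rfl⟩, by rw [map_inv, f.map_freeGroupLift]⟩

theorem exists_mem_wordSet_pow_inv_mul_mem {N : Subgroup G} [N.Normal] {r : ℕ}
    (hr : widthLE w (G ⧸ N) r) {p : G} (hp : p ∈ Subgroup.closure (wordSet w G)) :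
    ∃ u ∈ wordSet w G ^ r, u⁻¹ * p ∈ N := by
  have hπ := QuotientGroup.mk'_surjective N
  have hmem : QuotientGroup.mk' N p ∈ Subgroup.closure (wordSet w (G ⧸ N)) := by
    rw [← image_wordSet_of_surjective w hπ, ← MonoidHom.map_closure]
    exact Subgroup.mem_map_of_mem _ hp
  have hbounded := hr hmem
  rw [← image_wordSet_of_surjective w hπ, ← Set.image_pow] at hbounded
  obtain ⟨u, hu, hup⟩ := hbounded
  exact ⟨u, hu, QuotientGroup.eq.1 hup⟩

/-- An element of `G_w` of length exactly `t`, corrected modulo `N` by a product of at most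
`r` values of `w`. -/
theorem exists_mem_normal_mem_pow_forall_notMem_pow {N : Subgroup G} [N.Normal] {r t : ℕ}
    (hr : widthLE w (G ⧸ N) r) (ht : ¬ widthLE w G t) :
    ∃ d ∈ N, d ∈ wordSet w G ^ (t + r) ∧ ∀ j, j + r < t → d ∉ wordSet w G ^ j := by
  obtain ⟨x, hx, hxt⟩ := Set.not_subset.1 ht
  obtain ⟨n, hxn⟩ := (Subgroup.mem_closure_iff_exists_mem_pow (wordSet_inv w)).1 hx
  obtain ⟨p, hp, hpmin⟩ :=
    Set.exists_mem_pow_forall_lt_notMem_pow (one_mem_wordSet w) hxn hxt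
  obtain ⟨u, hu, hd⟩ := exists_mem_wordSet_pow_inv_mul_mem w hr
    (Subgroup.pow_subset Subgroup.subset_closure hp)
  have hu' : u⁻¹ ∈ wordSet w G ^ r := by rwa [← Set.mem_inv, ← inv_pow, wordSet_inv]
  refine ⟨u⁻¹ * p, hd, ?_, fun j hj hdj => hpmin (r + j) (by omega) ?_⟩
  · rw [add_comm, pow_add]
    exact Set.mul_mem_mul hu' hp
  · rw [pow_add, ← mul_inv_cancel_left u p]
    exact Set.mul_mem_mul hu hdj

end WordLength

section Ultraproduct

open Filter

variable {Γ : Type*} (𝒩 : Ultrafilter ℕ)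

def ultraSet (S : ℕ → Set Γ) : Set ((𝒩 : Filter ℕ).Germ Γ) :=
  {x | ∃ f : ℕ → Γ, (∀ᶠ n in (𝒩 : Filter ℕ), f n ∈ S n) ∧ x = Germ.ofFun f}

variable {𝒩}

theorem coe_mem_ultraSet {S : ℕ → Set Γ} {f : ℕ → Γ} :
    (f : (𝒩 : Filter ℕ).Germ Γ) ∈ ultraSet 𝒩 S ↔ ∀ᶠ n in (𝒩 : Filter ℕ), f n ∈ S n := by
  refine ⟨fun ⟨g, hg, hfg⟩ => ?_, fun h => ⟨f, h, rfl⟩⟩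
  filter_upwards [hg, Germ.coe_eq.1 hfg] with n hn he
  rwa [he]

theorem ultraSet_union (S T : ℕ → Set Γ) :
    ultraSet 𝒩 (fun n => S n ∪ T n) = ultraSet 𝒩 S ∪ ultraSet 𝒩 T := by
  ext x
  induction x using Germ.inductionOn with | h f => ?_
  simp only [Set.mem_union, coe_mem_ultraSet, Ultrafilter.eventually_or]

theorem ultraSet_inv [Inv Γ] (S : ℕ → Set Γ) :
    ultraSet 𝒩 (fun n => (S n)⁻¹) = (ultraSet 𝒩 S)⁻¹ := by
  ext x
  induction x using Germ.inductionOn with | h f => ?_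
  rw [Set.mem_inv, ← Germ.coe_inv, coe_mem_ultraSet, coe_mem_ultraSet]
  rfl

theorem ultraSet_one [One Γ] : ultraSet 𝒩 (fun _ => (1 : Set Γ)) = 1 := by
  ext x
  induction x using Germ.inductionOn with | h f => ?_
  rw [coe_mem_ultraSet, Set.mem_one, ← Germ.coe_one, Germ.coe_eq]
  rfl

theorem ultraSet_mul [Mul Γ] (S T : ℕ → Set Γ) :
    ultraSet 𝒩 (fun n => S n * T n) = ultraSet 𝒩 S * ultraSet 𝒩 T := by
  ext x
  induction x using Germ.inductionOn with | h f => ?_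
  rw [coe_mem_ultraSet]
  constructor
  · intro h
    obtain ⟨a, ha⟩ := h.choice
    obtain ⟨b, hb⟩ := (ha.mono fun n hn => hn.2).choice
    refine ⟨a, coe_mem_ultraSet.2 (ha.mono fun n hn => hn.1),
      b, coe_mem_ultraSet.2 (hb.mono fun n hn => hn.1), ?_⟩
    change (a : (𝒩 : Filter ℕ).Germ Γ) * b = f
    rw [← Germ.coe_mul, Germ.coe_eq]
    exact hb.mono fun n hn => hn.2
  · rintro ⟨_, ⟨a, ha, rfl⟩, _, ⟨b, hb, rfl⟩, hab⟩
    replace hab : (a : (𝒩 : Filter ℕ).Germ Γ) * b = f := hab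
    rw [← Germ.coe_mul, Germ.coe_eq] at hab
    filter_upwards [ha, hb, hab] with n han hbn habn
    exact habn ▸ Set.mul_mem_mul han hbn

theorem ultraSet_pow [Monoid Γ] (S : ℕ → Set Γ) (m : ℕ) :
    ultraSet 𝒩 (fun n => S n ^ m) = ultraSet 𝒩 S ^ m := by
  induction m with
  | zero => simpa only [pow_zero] using ultraSet_one
  | succ m ih => simpa only [pow_succ, ih] using ultraSet_mul (𝒩 := 𝒩) (fun n => S n ^ m) S

theorem coe_mem_ultraSubgroup [Group Γ] {Λ : ℕ → Subgroup Γ} {f : ℕ → Γ} :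
    (f : (𝒩 : Filter ℕ).Germ Γ) ∈ ultraSubgroup 𝒩 Λ ↔ ∀ᶠ n in (𝒩 : Filter ℕ), f n ∈ Λ n :=
  coe_mem_ultraSet

end Ultraproduct

section VerbalUltraproduct

open Filter

variable {G : Type*} [Group G] {k : ℕ} (w : FreeGroup (Fin k))

def verbalValues (H : Subgroup G) : Set G :=
  {x | ∃ g : Fin k → G, (∀ i, g i ∈ H) ∧ x = FreeGroup.lift g w}

theorem image_subtype_wordSet (H : Subgroup G) :
    H.subtype '' wordSet w H = verbalValues w H ∪ (verbalValues w H)⁻¹ := by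
  ext x
  constructor
  · rintro ⟨y, ⟨g, rfl | rfl⟩, rfl⟩
    · exact Or.inl ⟨H.subtype ∘ g, fun i => (g i).2, H.subtype.map_freeGroupLift w g⟩
    · exact Or.inr ⟨H.subtype ∘ g, fun i => (g i).2,
        by rw [map_inv, inv_inv, H.subtype.map_freeGroupLift]⟩
  · rintro (⟨g, hg, rfl⟩ | ⟨g, hg, hx⟩)
    · exact ⟨_, ⟨fun i => ⟨g i, hg i⟩, Or.inl rfl⟩, H.subtype.map_freeGroupLift w _⟩
    · refine ⟨_, ⟨fun i => ⟨g i, hg i⟩, Or.inr rfl⟩, ?_⟩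
      rw [map_inv, H.subtype.map_freeGroupLift, ← inv_inv x, hx]
      rfl

theorem inv_image_subtype_wordSet (H : Subgroup G) :
    (H.subtype '' wordSet w H)⁻¹ = H.subtype '' wordSet w H := by
  rw [← Set.image_inv, wordSet_inv]

theorem verbalIn_eq_closure (H : Subgroup G) :
    verbalIn w H = Subgroup.closure (H.subtype '' wordSet w H) := by
  rw [image_subtype_wordSet, Subgroup.closure_union, Subgroup.closure_inv, sup_idem]
  rfl

theorem Filter.Germ.coe_freeGroupLift {α : Type*} {l : Filter α} (F : Fin k → α → G) :
    ((fun a => FreeGroup.lift (fun i => F i a) w : α → G) : l.Germ G) =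
      FreeGroup.lift (fun i => (F i : l.Germ G)) w := by
  have hF : (fun a => FreeGroup.lift (fun i => F i a) w) = FreeGroup.lift F w :=
    funext fun a => ((Pi.evalMonoidHom (fun _ => G) a).map_freeGroupLift w F).symm
  rw [hF]
  exact (Germ.coeMulHom l).map_freeGroupLift w F

variable {𝒩 : Ultrafilter ℕ}

theorem ultraSet_verbalValues (Λ : ℕ → Subgroup G) :
    ultraSet 𝒩 (fun n => verbalValues w (Λ n)) = verbalValues w (ultraSubgroup 𝒩 Λ) := by
  ext x
  induction x using Germ.inductionOn with | h f => ?_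
  rw [coe_mem_ultraSet]
  constructor
  · intro h
    obtain ⟨g, hg⟩ := h.choice
    refine ⟨fun i => ((fun n => g n i : ℕ → G) : (𝒩 : Filter ℕ).Germ G),
      fun i => coe_mem_ultraSubgroup.2 (hg.mono fun n hn => hn.1 i), ?_⟩
    rw [← Germ.coe_freeGroupLift, Germ.coe_eq]
    exact hg.mono fun n hn => hn.2
  · rintro ⟨g, hg, hfg⟩
    choose F hF hgF using hg
    obtain rfl : g = fun i => (F i : (𝒩 : Filter ℕ).Germ G) := funext hgF
    rw [← Germ.coe_freeGroupLift, Germ.coe_eq] at hfg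
    filter_upwards [hfg, eventually_all.2 hF] with n hfn hFn
    exact ⟨_, hFn, hfn⟩

/-- Łoś's theorem for the verbal subset. -/
theorem ultraSet_image_subtype_wordSet (Λ : ℕ → Subgroup G) :
    ultraSet 𝒩 (fun n => (Λ n).subtype '' wordSet w (Λ n)) =
      (ultraSubgroup 𝒩 Λ).subtype '' wordSet w (ultraSubgroup 𝒩 Λ) := by
  simp only [image_subtype_wordSet, ultraSet_union, ultraSet_inv, ultraSet_verbalValues]

theorem coe_mem_verbalIn_ultraSubgroup_iff {Λ : ℕ → Subgroup G} {f : ℕ → G} :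
    (f : (𝒩 : Filter ℕ).Germ G) ∈ verbalIn w (ultraSubgroup 𝒩 Λ) ↔
      ∃ m, ∀ᶠ n in (𝒩 : Filter ℕ), f n ∈ ((Λ n).subtype '' wordSet w (Λ n)) ^ m := by
  rw [verbalIn_eq_closure, Subgroup.mem_closure_iff_exists_mem_pow
    (inv_image_subtype_wordSet w _), ← ultraSet_image_subtype_wordSet]
  simp only [← ultraSet_pow, coe_mem_ultraSet]

end VerbalUltraproduct

theorem exists_tendsto_atTop_forall_eventually_mul {l : Filter ℕ} (hl : l ≤ Filter.cofinite)
    {P : ℕ → ℕ → Prop} (hP : ∀ n, Antitone (P n)) (h : ∀ t, ∀ᶠ n in l, P n t) :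
    ∃ c : ℕ → ℕ, Filter.Tendsto c l Filter.atTop ∧ ∀ j, ∀ᶠ n in l, P n (j * c n) := by
  classical
  -- `c n * c n` dominates every fixed multiple `j * c n` as soon as `c n ≥ j`.
  set c : ℕ → ℕ := fun n => Nat.findGreatest (fun c => P n (c * c)) n
  have hc : Filter.Tendsto c l Filter.atTop := by
    refine Filter.tendsto_atTop.2 fun B => ?_
    have hBn : ∀ᶠ n in l, B ≤ n :=
      (Filter.eventually_ge_atTop B).filter_mono (hl.trans Nat.cofinite_eq_atTop.le)
    filter_upwards [hBn, h (B * B)] with n hBn hPn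
    exact Nat.le_findGreatest hBn hPn
  refine ⟨c, hc, fun j => ?_⟩
  filter_upwards [hc.eventually_ge_atTop j, h 0] with n hj h0
  exact hP n (Nat.mul_le_mul_right _ hj) (Nat.findGreatest_spec (P := fun c => P n (c * c)) (Nat.zero_le n) h0)

theorem Subgroup.relIndex_eq_zero_of_forall_inv_mul_notMem {G : Type*} [Group G]
    {H K : Subgroup G} (d : ℕ → G) (hd : ∀ j, d j ∈ K) (hsep : ∀ i j, i < j → (d i)⁻¹ * d j ∉ H) :
    H.relIndex K = 0 := by
  by_contra hne
  have : (H.subgroupOf K).FiniteIndex := ⟨hne⟩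
  obtain ⟨i, j, hij, heq⟩ := Finite.exists_ne_map_eq_of_infinite
    (fun j => ((⟨d j, hd j⟩ : K) : K ⧸ H.subgroupOf K))
  have hmem : (d i)⁻¹ * d j ∈ H := Subgroup.mem_subgroupOf.1 (QuotientGroup.eq.1 heq)
  rcases hij.lt_or_gt with h | h
  · exact hsep i j h hmem
  · exact hsep j i h (by simpa using H.inv_mem hmem)

section Width

variable {Γ : Type*} [Group Γ] {k : ℕ} (w : FreeGroup (Fin k))

theorem exists_mem_subgroup_mem_pow_forall_notMem_pow {Δ Λ : Subgroup Γ}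
    [(Δ.subgroupOf Λ).Normal] {r t : ℕ} (hr : widthLE w (Λ ⧸ Δ.subgroupOf Λ) r) (ht : ¬ widthLE w Λ t) :
    ∃ d ∈ Δ, d ∈ (Λ.subtype '' wordSet w Λ) ^ (t + r) ∧
      ∀ j, j + r < t → d ∉ (Λ.subtype '' wordSet w Λ) ^ j := by
  obtain ⟨d, hdΔ, hd, hdj⟩ := exists_mem_normal_mem_pow_forall_notMem_pow w hr ht
  refine ⟨d, Subgroup.mem_subgroupOf.1 hdΔ, ?_, fun j hj => ?_⟩
  · rw [← Set.image_pow]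
    exact Set.mem_image_of_mem _ hd
  · rw [← Set.image_pow]
    exact fun h => hdj j hj (Λ.subtype_injective.mem_set_image.1 h)

variable {𝒩 : Ultrafilter ℕ} {Λ Δ : ℕ → Subgroup Γ}

theorem ultraSubgroup_le_verbalIn (hle : ∀ n, Δ n ≤ Λ n)
    (hΔw : ∀ n, (Δ n).subgroupOf (Λ n) ≤ Subgroup.closure (wordSet w ↥(Λ n)))
    {s : ℕ} (hs : {n : ℕ | widthLE w ↥(Λ n) s} ∈ 𝒩) :
    ultraSubgroup 𝒩 Δ ≤ verbalIn w (ultraSubgroup 𝒩 Λ) := by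
  rintro _ ⟨f, hf, rfl⟩
  refine (coe_mem_verbalIn_ultraSubgroup_iff w).2 ⟨s, ?_⟩
  filter_upwards [hf, hs] with n hfn hwidth
  rw [← Set.image_pow]
  exact ⟨⟨f n, hle n hfn⟩, hwidth (hΔw n (Subgroup.mem_subgroupOf.2 hfn)), rfl⟩

theorem relIndex_verbalIn_eq_zero (h𝒩 : (𝒩 : Filter ℕ) ≤ Filter.cofinite) {r : ℕ}
    (hnorm : ∀ n, ((Δ n).subgroupOf (Λ n)).Normal)
    (hqwidth : ∀ n, letI := hnorm n
      widthLE w (↥(Λ n) ⧸ (Δ n).subgroupOf (Λ n)) r)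
    (hunb : ∀ s, ∀ᶠ n in (𝒩 : Filter ℕ), ¬ widthLE w ↥(Λ n) s) :
    (verbalIn w (ultraSubgroup 𝒩 Λ)).relIndex (ultraSubgroup 𝒩 Δ) = 0 := by
  set V := fun n => (Λ n).subtype '' wordSet w (Λ n)
  obtain ⟨c, hc, hcj⟩ := exists_tendsto_atTop_forall_eventually_mul h𝒩
    (P := fun n t => ¬ widthLE w (Λ n) t)
    (fun n _ _ hst h hwidth => h (widthLE_mono w hst hwidth)) hunb
  have hD : ∀ j n, ∃ d ∈ Δ n, ¬ widthLE w (Λ n) (j * c n) →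
      d ∈ V n ^ (j * c n + r) ∧ ∀ i, i + r < j * c n → d ∉ V n ^ i := by
    intro j n
    by_cases h : widthLE w (Λ n) (j * c n)
    · exact ⟨1, one_mem _, fun h' => absurd h h'⟩
    · have := hnorm n
      obtain ⟨d, hd, hd'⟩ := exists_mem_subgroup_mem_pow_forall_notMem_pow w (hqwidth n) h
      exact ⟨d, hd, fun _ => hd'⟩
  choose D hDΔ hD using hD
  refine Subgroup.relIndex_eq_zero_of_forall_inv_mul_notMem
    (fun j => (D j : (𝒩 : Filter ℕ).Germ Γ))
    (fun j => coe_mem_ultraSubgroup.2 (.of_forall (hDΔ j))) fun i j hij hmem => ?_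
  rw [← Filter.Germ.coe_inv, ← Filter.Germ.coe_mul, coe_mem_verbalIn_ultraSubgroup_iff] at hmem
  obtain ⟨m, hm⟩ := hmem
  obtain ⟨n, hn, hi, hj, hcn⟩ :=
    (hm.and <| (hcj i).and <| (hcj j).and <| hc.eventually_ge_atTop (m + 2 * r + 1)).exists
  -- `D j n = D i n * ((D i n)⁻¹ * D j n)` would be shorter than `j * c n - r`.
  refine (hD j n hj).2 (i * c n + r + m) ?_ ?_
  · nlinarith
  · rw [pow_add, ← mul_inv_cancel_left (D i n) (D j n)]
    exact Set.mul_mem_mul (hD i n hi).1 hn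

end Width

theorem stmt1 {Γ : Type*} [Group Γ] {k : ℕ} (w : FreeGroup (Fin k)) (r : ℕ)
    (𝒩 : Ultrafilter ℕ) (h𝒩 : ∀ n : ℕ, (𝒩 : Filter ℕ) ≠ pure n)
    (Λ Δ : ℕ → Subgroup Γ) (hle : ∀ n, Δ n ≤ Λ n)
    (hnorm : ∀ n, ((Δ n).subgroupOf (Λ n)).Normal)
    (hΔw : ∀ n, (Δ n).subgroupOf (Λ n) ≤ Subgroup.closure (wordSet w ↥(Λ n)))
    (hqwidth : ∀ n, letI := hnorm n
      widthLE w (↥(Λ n) ⧸ (Δ n).subgroupOf (Λ n)) r) :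
    (verbalIn w (ultraSubgroup 𝒩 Λ)).relIndex (ultraSubgroup 𝒩 Δ) ≠ 0 ↔
      ∃ s : ℕ, {n : ℕ | widthLE w ↥(Λ n) s} ∈ 𝒩 := by
  have hcof : (𝒩 : Filter ℕ) ≤ Filter.cofinite :=
    𝒩.le_cofinite_or_eq_pure.resolve_right fun ⟨n, hn⟩ => h𝒩 n (by rw [hn]; rfl)
  constructor
  · intro hfin
    by_contra! hunb
    exact hfin (relIndex_verbalIn_eq_zero w hcof hnorm hqwidth
      fun s => Ultrafilter.compl_mem_iff_notMem.2 (hunb s))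
  · rintro ⟨s, hs⟩
    rw [Subgroup.relIndex_eq_one.2 (ultraSubgroup_le_verbalIn w hle hΔw hs)]
    exact one_ne_zero
end

section
/- Let G be a topological group and let Λ be a subgroup of G. Suppose G has a basis 𝒰 of open neighborhoods of the identity such that each U ∈ 𝒰 is a subgroup of G that is contained in Λ and normal in Λ. Then every left Cauchy filter on G is a right Cauchy filter: if ℱ is a proper filter on G such that for every U ∈ 𝒰 there exists F ∈ ℱ with x⁻¹y ∈ U for all x,y ∈ F, then for every U ∈ 𝒰 there exists F′ ∈ ℱ with xy⁻¹ ∈ U for all x,y ∈ F′. -/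
/-!
Fix `x₀` in a left `U`-small set `F` and write `a = x₀⁻¹ x`, `v = y⁻¹ x` for `x, y ∈ F`.
Then `x y⁻¹ = x₀ (a v a⁻¹) x₀⁻¹`, where `a ∈ U ≤ Λ`. Choosing `V ∈ 𝒰` with `x₀ V x₀⁻¹ ⊆ U`
(continuity of conjugation) and restricting to a left `V`-small member of the filter, `v ∈ V`,
so `a v a⁻¹ ∈ V` by normality of `V` in `Λ`, and hence `x y⁻¹ ∈ U`.
-/

lemma mul_inv_eq_conj_conj {G : Type*} [Group G] (x₀ x y : G) :
    x * y⁻¹ = x₀ * ((x₀⁻¹ * x) * (y⁻¹ * x) * (x₀⁻¹ * x)⁻¹) * x₀⁻¹ := by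
  group

lemma mul_inv_mem_of_conj_mem {G : Type*} [Group G] {U V : Set G} {x₀ x y : G}
    (hUV : ∀ a ∈ U, ∀ v ∈ V, a * v * a⁻¹ ∈ V) (hVU : ∀ v ∈ V, x₀ * v * x₀⁻¹ ∈ U)
    (hx : x₀⁻¹ * x ∈ U) (hyx : y⁻¹ * x ∈ V) : x * y⁻¹ ∈ U := by
  rw [mul_inv_eq_conj_conj x₀]
  exact hVU _ (hUV _ hx _ hyx)

theorem stmt2_general {G : Type*} [Group G] [TopologicalSpace G] [IsTopologicalGroup G]
    (Λ : Subgroup G) (𝒰 : Set (Subgroup G))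
    (hsub : ∀ U ∈ 𝒰, U ≤ Λ)
    (hnormal : ∀ U ∈ 𝒰, ∀ x ∈ Λ, ∀ u ∈ U, x * u * x⁻¹ ∈ U)
    (hbasis : (nhds (1 : G)).HasBasis (fun U : Subgroup G => U ∈ 𝒰) (fun U => (U : Set G)))
    (ℱ : Filter G) [ℱ.NeBot]
    (hleft : ∀ U ∈ 𝒰, ∃ F ∈ ℱ, ∀ x ∈ F, ∀ y ∈ F, x⁻¹ * y ∈ (U : Set G)) :
    ∀ U ∈ 𝒰, ∃ F ∈ ℱ, ∀ x ∈ F, ∀ y ∈ F, x * y⁻¹ ∈ (U : Set G) := by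
  intro U hU
  obtain ⟨F, hF, hFU⟩ := hleft U hU
  obtain ⟨x₀, hx₀⟩ := ℱ.nonempty_of_mem hF
  have hconj : Filter.Tendsto (fun g => x₀ * g * x₀⁻¹) (nhds 1) (nhds 1) :=
    (IsTopologicalGroup.continuous_conj x₀).tendsto' 1 1 (by simp)
  obtain ⟨V, hV, hVU⟩ := (hbasis.tendsto_iff hbasis).1 hconj U hU
  obtain ⟨F₁, hF₁, hF₁V⟩ := hleft V hV
  refine ⟨F ∩ F₁, Filter.inter_mem hF hF₁, ?_⟩
  rintro x ⟨hxF, hxF₁⟩ y ⟨-, hyF₁⟩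
  exact mul_inv_mem_of_conj_mem (fun a ha => hnormal V hV a (hsub U hU ha)) hVU
    (hFU x₀ hx₀ x hxF) (hF₁V y hyF₁ x hxF₁)

theorem stmt2 {G : Type*} [Group G] [TopologicalSpace G] [IsTopologicalGroup G]
    (Λ : Subgroup G) (𝒰 : Set (Subgroup G))
    (hopen : ∀ U ∈ 𝒰, IsOpen (U : Set G))
    (hsub : ∀ U ∈ 𝒰, U ≤ Λ)
    (hnormal : ∀ U ∈ 𝒰, ∀ x ∈ Λ, ∀ u ∈ U, x * u * x⁻¹ ∈ U)
    (hbasis : (nhds (1 : G)).HasBasis (fun U : Subgroup G => U ∈ 𝒰) (fun U => (U : Set G)))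
    (ℱ : Filter G) [ℱ.NeBot]
    (hleft : ∀ U ∈ 𝒰, ∃ F ∈ ℱ, ∀ x ∈ F, ∀ y ∈ F, x⁻¹ * y ∈ (U : Set G)) :
    ∀ U ∈ 𝒰, ∃ F ∈ ℱ, ∀ x ∈ F, ∀ y ∈ F, x * y⁻¹ ∈ (U : Set G) :=
  stmt2_general Λ 𝒰 hsub hnormal hbasis ℱ hleft
end

section
/- Let Γ and Λ be Hausdorff topological groups, let A be a dense subgroup of Γ, and let U be an open subgroup of Γ. Let α : A → Λ be a group homomorphism (not assumed continuous) and let β : U → Λ be a continuous group homomorphism, and assume that α and β agree on A ∩ U. Then there is a unique continuous group homomorphism γ : Γ → Λ whose restriction to A is α and whose restriction to U is β. -/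
/-!
Density of `A` and openness of `U` give `Γ = A * U`, and agreement on `A ∩ U` makes
`γ (a * u) := α a * β u` well defined. Near any point `g = a * u` the map `γ` is
`x ↦ α a * β (a⁻¹ * x)` on the open coset `a • U`, so it is continuous; it is then
multiplicative because it is so on the dense set `A × A`, and unique because `A` is dense.
-/

open Topology

section Glue

variable {Γ Λ : Type*} [Group Γ] [Group Λ] {A U : Subgroup Γ}

theorem mul_map_eq_of_mul_eq {α : A →* Λ} {β : U →* Λ}
    (hagree : ∀ x (hxA : x ∈ A) (hxU : x ∈ U), α ⟨x, hxA⟩ = β ⟨x, hxU⟩)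
    {a a' w w' : Γ} (ha : a ∈ A) (ha' : a' ∈ A) (hw : w ∈ U) (hw' : w' ∈ U)
    (h : a * w = a' * w') : α ⟨a, ha⟩ * β ⟨w, hw⟩ = α ⟨a', ha'⟩ * β ⟨w', hw'⟩ := by
  have hcA : a'⁻¹ * a ∈ A := A.mul_mem (A.inv_mem ha') ha
  have hcU : a'⁻¹ * a ∈ U := by
    rw [show a'⁻¹ * a = w' * w⁻¹ by rw [inv_mul_eq_iff_eq_mul, ← mul_assoc, ← h]; group]
    exact U.mul_mem hw' (U.inv_mem hw)
  have hα : α ⟨a, ha⟩ = α ⟨a', ha'⟩ * α ⟨a'⁻¹ * a, hcA⟩ := by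
    rw [← map_mul]; congr 1; ext; simp
  have hβ : β ⟨a'⁻¹ * a, hcU⟩ * β ⟨w, hw⟩ = β ⟨w', hw'⟩ := by
    rw [← map_mul]; congr 1; ext
    change a'⁻¹ * a * w = w'
    rw [mul_assoc, h]; group
  rw [hα, hagree _ hcA hcU, mul_assoc, hβ]

variable (α : A →* Λ) (β : U →* Λ) (fac : ∀ g : Γ, ∃ a ∈ A, a⁻¹ * g ∈ U)

noncomputable def glue (g : Γ) : Λ :=
  α ⟨(fac g).choose, (fac g).choose_spec.1⟩ * β ⟨(fac g).choose⁻¹ * g, (fac g).choose_spec.2⟩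

variable {α β}

theorem glue_eq (hagree : ∀ x (hxA : x ∈ A) (hxU : x ∈ U), α ⟨x, hxA⟩ = β ⟨x, hxU⟩)
    {a w : Γ} (ha : a ∈ A) (hw : w ∈ U) : glue α β fac (a * w) = α ⟨a, ha⟩ * β ⟨w, hw⟩ :=
  mul_map_eq_of_mul_eq hagree _ _ _ _ (mul_inv_cancel_left _ _)

theorem glue_of_mem_left (hagree : ∀ x (hxA : x ∈ A) (hxU : x ∈ U), α ⟨x, hxA⟩ = β ⟨x, hxU⟩)
    {x : Γ} (hx : x ∈ A) : glue α β fac x = α ⟨x, hx⟩ := by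
  calc glue α β fac x = glue α β fac (x * 1) := by rw [mul_one]
    _ = α ⟨x, hx⟩ * β 1 := glue_eq fac hagree hx U.one_mem
    _ = α ⟨x, hx⟩ := by rw [map_one, mul_one]

theorem glue_of_mem_right (hagree : ∀ x (hxA : x ∈ A) (hxU : x ∈ U), α ⟨x, hxA⟩ = β ⟨x, hxU⟩)
    {x : Γ} (hx : x ∈ U) : glue α β fac x = β ⟨x, hx⟩ := by
  calc glue α β fac x = glue α β fac (1 * x) := by rw [one_mul]
    _ = α 1 * β ⟨x, hx⟩ := glue_eq fac hagree A.one_mem hx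
    _ = β ⟨x, hx⟩ := by rw [map_one, one_mul]

end Glue

section Topological

variable {Γ Λ : Type*} [Group Γ] [TopologicalSpace Γ] [Group Λ] [TopologicalSpace Λ]

theorem Dense.exists_inv_mul_mem_of_isOpen [IsTopologicalGroup Γ] {A U : Subgroup Γ} (hA : Dense (A : Set Γ))
    (hU : IsOpen (U : Set Γ)) (g : Γ) : ∃ a ∈ A, a⁻¹ * g ∈ U := by
  have hV : IsOpen ((g⁻¹ * ·) ⁻¹' (U : Set Γ)) := hU.preimage (continuous_const_mul _)
  obtain ⟨a, haA, haV⟩ := hA.exists_mem_open hV ⟨g, by simp [U.one_mem]⟩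
  exact ⟨a, haA, by simpa using U.inv_mem haV⟩

theorem continuous_glue [IsTopologicalGroup Γ] [IsTopologicalGroup Λ] {A U : Subgroup Γ} (hU : IsOpen (U : Set Γ))
    {α : A →* Λ} {β : U →* Λ} (hβ : Continuous β) (fac : ∀ g : Γ, ∃ a ∈ A, a⁻¹ * g ∈ U)
    (hagree : ∀ x (hxA : x ∈ A) (hxU : x ∈ U), α ⟨x, hxA⟩ = β ⟨x, hxU⟩) :
    Continuous (glue α β fac) := by
  refine continuous_iff_continuousAt.2 fun g => ?_
  obtain ⟨a, haA, hgU⟩ := fac g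
  have hemb : IsOpenEmbedding fun u : U => a * (u : Γ) :=
    (Homeomorph.mulLeft a).isOpenEmbedding.comp hU.isOpenEmbedding_subtypeVal
  have hcomp : (glue α β fac ∘ fun u : U => a * (u : Γ)) = fun u => α ⟨a, haA⟩ * β u :=
    funext fun u => glue_eq fac hagree haA u.2
  have hg : g = a * ((⟨a⁻¹ * g, hgU⟩ : U) : Γ) := (mul_inv_cancel_left a g).symm
  rw [hg, ← hemb.continuousAt_iff, hcomp]
  exact (continuous_const.mul hβ).continuousAt

theorem map_mul_of_dense [ContinuousMul Γ] [ContinuousMul Λ] [T2Space Λ] {f : Γ → Λ}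
    (hf : Continuous f) {S : Set Γ} (hS : Dense S)
    (hmul : ∀ x ∈ S, ∀ y ∈ S, f (x * y) = f x * f y) (x y : Γ) :
    f (x * y) = f x * f y := by
  have h : (fun p : Γ × Γ => f (p.1 * p.2)) = fun p => f p.1 * f p.2 :=
    Continuous.ext_on (hS.prod hS) (by fun_prop) (by fun_prop)
      fun p hp => hmul p.1 hp.1 p.2 hp.2
  exact congrFun h (x, y)

end Topological

theorem stmt3_general {Γ Λ : Type*}
    [Group Γ] [TopologicalSpace Γ] [IsTopologicalGroup Γ]
    [Group Λ] [TopologicalSpace Λ] [IsTopologicalGroup Λ] [T2Space Λ]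
    (A U : Subgroup Γ) (hA : Dense (A : Set Γ)) (hU : IsOpen (U : Set Γ))
    (α : A →* Λ) (β : U →* Λ) (hβ : Continuous β)
    (hagree : ∀ x (hxA : x ∈ A) (hxU : x ∈ U), α ⟨x, hxA⟩ = β ⟨x, hxU⟩) :
    ∃! γ : Γ →* Λ, Continuous γ ∧ (∀ x (hx : x ∈ A), γ x = α ⟨x, hx⟩) ∧
      (∀ x (hx : x ∈ U), γ x = β ⟨x, hx⟩) := by
  have fac := hA.exists_inv_mul_mem_of_isOpen hU
  have hcont := continuous_glue hU hβ fac hagree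
  have hleft : ∀ x (hx : x ∈ A), glue α β fac x = α ⟨x, hx⟩ :=
    fun x hx => glue_of_mem_left fac hagree hx
  have hmul := map_mul_of_dense hcont hA fun x hx y hy => by
    rw [hleft x hx, hleft y hy, hleft _ (A.mul_mem hx hy), ← map_mul, MulMemClass.mk_mul_mk]
  refine ⟨MonoidHom.mk' _ hmul, ⟨hcont, hleft, fun x hx => glue_of_mem_right fac hagree hx⟩, ?_⟩
  rintro γ ⟨hγ, hγA, -⟩
  exact DFunLike.coe_injective <| Continuous.ext_on hA hγ hcont fun x hx => by
    rw [hγA x hx, MonoidHom.mk'_apply, hleft x hx]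

theorem stmt3 {Γ Λ : Type*}
    [Group Γ] [TopologicalSpace Γ] [IsTopologicalGroup Γ] [T2Space Γ]
    [Group Λ] [TopologicalSpace Λ] [IsTopologicalGroup Λ] [T2Space Λ]
    (A U : Subgroup Γ) (hA : Dense (A : Set Γ)) (hU : IsOpen (U : Set Γ))
    (α : A →* Λ) (β : U →* Λ) (hβ : Continuous β)
    (hagree : ∀ x (hxA : x ∈ A) (hxU : x ∈ U), α ⟨x, hxA⟩ = β ⟨x, hxU⟩) :
    ∃! γ : Γ →* Λ, Continuous γ ∧ (∀ x (hx : x ∈ A), γ x = α ⟨x, hx⟩) ∧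
      (∀ x (hx : x ∈ U), γ x = β ⟨x, hx⟩) :=
  stmt3_general A U hA hU α β hβ hagree
end

section
/- Let G and E be topological groups and let η : E → G be a continuous open surjective group homomorphism whose kernel D is contained in the center of E (a topological central extension). Then the generalized Steinberg symbol is continuous: the map sending a commuting pair (g₁,g₂) to [g₁:g₂], defined on the subspace {(g₁,g₂) ∈ G × G : g₁g₂ = g₂g₁} of G × G with values in E, is continuous. -/
open scoped commutatorElement

/-! Since the kernel is central, the commutator of two elements of `E` depends only on their
images, so pulled back along `η × η` the symbol is the commutator map of `E`, which is
continuous. Restricted to the preimage of the commuting pairs, `η × η` is still an open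
continuous surjection, hence a quotient map, so continuity descends. -/

section CentralKernel

variable {E : Type*} [Group E]

theorem commutatorElement_mul_left_of_mem_center {d : E} (hd : d ∈ Subgroup.center E)
    (x z : E) : ⁅x * d, z⁆ = ⁅x, z⁆ := by
  have hdz : z * d = d * z := Subgroup.mem_center_iff.mp hd z
  calc ⁅x * d, z⁆ = x * (d * z) * d⁻¹ * x⁻¹ * z⁻¹ := by group
    _ = x * (z * d) * d⁻¹ * x⁻¹ * z⁻¹ := by rw [hdz]
    _ = ⁅x, z⁆ := by group

theorem commutatorElement_mul_right_of_mem_center {d : E} (hd : d ∈ Subgroup.center E)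
    (x z : E) : ⁅x, z * d⁆ = ⁅x, z⁆ := by
  rw [← commutatorElement_inv, commutatorElement_mul_left_of_mem_center hd,
    commutatorElement_inv]

theorem MonoidHom.commutatorElement_eq_of_map_eq {G : Type*} [Group G] (η : E →* G)
    (hcent : η.ker ≤ Subgroup.center E) {x₁ x₂ y₁ y₂ : E} (h₁ : η x₁ = η y₁)
    (h₂ : η x₂ = η y₂) : ⁅x₁, x₂⁆ = ⁅y₁, y₂⁆ := by
  have hd₁ : x₁⁻¹ * y₁ ∈ Subgroup.center E := hcent (by simp [MonoidHom.mem_ker, h₁])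
  have hd₂ : x₂⁻¹ * y₂ ∈ Subgroup.center E := hcent (by simp [MonoidHom.mem_ker, h₂])
  rw [← mul_inv_cancel_left x₁ y₁, ← mul_inv_cancel_left x₂ y₂,
    commutatorElement_mul_left_of_mem_center hd₁, commutatorElement_mul_right_of_mem_center hd₂]

end CentralKernel

theorem stmt6_general {E G : Type*}
    [Group E] [TopologicalSpace E] [IsTopologicalGroup E]
    [Group G] [TopologicalSpace G]
    (η : E →* G) (hcont : Continuous η) (hopen : IsOpenMap η)
    (hsurj : Function.Surjective η) (hcent : η.ker ≤ Subgroup.center E) :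
    Continuous (fun p : {p : G × G // Commute p.1 p.2} =>
      ⁅Function.surjInv hsurj p.val.1, Function.surjInv hsurj p.val.2⁆) := by
  have hη : IsOpenQuotientMap η := ⟨hsurj, hcont, hopen⟩
  have hq : Topology.IsQuotientMap ({p : G × G | Commute p.1 p.2}.restrictPreimage
      (Prod.map η η)) := ((hη.prodMap hη).restrictPreimage _).isQuotientMap
  rw [hq.continuous_iff]
  have hlift : (fun p : {p : G × G // Commute p.1 p.2} =>
      ⁅Function.surjInv hsurj p.val.1, Function.surjInv hsurj p.val.2⁆) ∘
        {p : G × G | Commute p.1 p.2}.restrictPreimage (Prod.map η η) =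
      fun q => ⁅q.val.1, q.val.2⁆ := by
    funext q
    exact η.commutatorElement_eq_of_map_eq hcent (Function.surjInv_eq hsurj _)
      (Function.surjInv_eq hsurj _)
  rw [hlift]
  simp only [commutatorElement_def]
  fun_prop

/-- Continuity of the generalized Steinberg symbol of a topological central extension
`η : E → G`: the map sending a commuting pair `(g₁, g₂)` to `[g₁ : g₂]` (the commutator
of lifts, here realized via a choice of section `Function.surjInv hsurj`) is continuous
on the subspace of commuting pairs of `G × G`. -/
theorem stmt6 {E G : Type*}
    [Group E] [TopologicalSpace E] [IsTopologicalGroup E]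
    [Group G] [TopologicalSpace G] [IsTopologicalGroup G]
    (η : E →* G) (hcont : Continuous η) (hopen : IsOpenMap η)
    (hsurj : Function.Surjective η) (hcent : η.ker ≤ Subgroup.center E) :
    Continuous (fun p : {p : G × G // Commute p.1 p.2} =>
      ⁅Function.surjInv hsurj p.val.1, Function.surjInv hsurj p.val.2⁆) :=
  stmt6_general η hcont hopen hsurj hcent
end

section
/- Let G₁,…,G_s be non-trivial finite cyclic groups and let G = G₁ × ⋯ × G_s. Let L be a subgroup of G containing G² := {g² : g ∈ G}, and assume that the set A := {(g₁,…,g_s) ∈ L : gᵢ ≠ 1 for all 1 ≤ i ≤ s} is non-empty. Then G⁴ := {g⁴ : g ∈ G} is contained in the subgroup generated by A. -/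
/-!
Fix `a ∈ L` with no trivial coordinate. For every `h`, the element `y = g² h² a` lies in `L`, and
so does `y⁻¹ g⁴`, and their product is `g⁴`. It therefore suffices to choose each coordinate of `h`
so that `y` avoids both `1` and `g⁴` there; this is possible in any group, because the three
choices `h = g⁻¹, g, 1` cannot all fail unless `a = 1`.
-/

lemma exists_sq_mul_sq_mul_ne_one_ne_pow_four {C : Type*} [Group C] {a : C} (ha : a ≠ 1)
    (g : C) : ∃ h : C, g ^ 2 * h ^ 2 * a ≠ 1 ∧ g ^ 2 * h ^ 2 * a ≠ g ^ 4 := by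
  by_contra! H
  have ha4 : a = g ^ 4 := by simpa using H g⁻¹ (by simpa using ha)
  subst ha4
  have hg4 : g ^ 4 = g ^ 2 * g ^ 2 := pow_add g 2 2
  have hg8 : g ^ 4 * g ^ 4 = 1 := by
    by_contra hne
    refine ha (mul_eq_left.mp (?_ : g ^ 4 * g ^ 4 = g ^ 4))
    have h := H g (by rwa [hg4] at hne ⊢)
    rwa [← hg4] at h
  have hg2 : g ^ 2 = 1 := by
    by_cases hg6 : g ^ 2 * g ^ 4 = 1
    · have h24 : g ^ 2 = g ^ 4 := mul_right_cancel (hg6.trans hg8.symm)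
      exact mul_eq_left.mp (hg4.symm.trans h24.symm)
    · simpa using H 1 (by simpa using hg6)
  exact ha (by rw [hg4, hg2, one_mul])

theorem stmt10_general {s : ℕ} (G : Fin s → Type*) [∀ i, Group (G i)]
    (L : Subgroup (∀ i, G i)) (hL : ∀ g : ∀ i, G i, g ^ 2 ∈ L)
    (hA : ∃ g ∈ L, ∀ i, g i ≠ 1) :
    ∀ g : ∀ i, G i, g ^ 4 ∈
      Subgroup.closure {g : ∀ i, G i | g ∈ L ∧ ∀ i, g i ≠ 1} := by
  intro g
  obtain ⟨a, haL, ha⟩ := hA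
  choose h hy_ne_one hy_ne using fun i => exists_sq_mul_sq_mul_ne_one_ne_pow_four (ha i) (g i)
  set A := {g : ∀ i, G i | g ∈ L ∧ ∀ i, g i ≠ 1}
  set y := g ^ 2 * h ^ 2 * a
  have hyL : y ∈ L := L.mul_mem (L.mul_mem (hL g) (hL h)) haL
  have hyA : y ∈ A := ⟨hyL, hy_ne_one⟩
  have hy'A : y⁻¹ * g ^ 4 ∈ A :=
    ⟨L.mul_mem (L.inv_mem hyL) (pow_mul g 2 2 ▸ hL (g ^ 2)),
      fun i h1 => hy_ne i (inv_mul_eq_one.mp h1)⟩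
  simpa using mul_mem (Subgroup.subset_closure hyA) (Subgroup.subset_closure hy'A)

theorem stmt10 {s : ℕ} (G : Fin s → Type*) [∀ i, Group (G i)] [∀ i, Finite (G i)]
    [∀ i, IsCyclic (G i)] [∀ i, Nontrivial (G i)]
    (L : Subgroup (∀ i, G i)) (hL : ∀ g : ∀ i, G i, g ^ 2 ∈ L)
    (hA : ∃ g ∈ L, ∀ i, g i ≠ 1) :
    ∀ g : ∀ i, G i, g ^ 4 ∈
      Subgroup.closure {g : ∀ i, G i | g ∈ L ∧ ∀ i, g i ≠ 1} :=
  stmt10_general G L hL hA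
end

section
/- Let t ∈ ℤ[1/2] be such that the field E := ℚ(√−7, √−t) ⊆ ℂ has degree 4 over ℚ and contains none of √3, √−1, √−3 (i.e. no element of E squares to 3, −1, or −3). Let T be a finite subset of {odd primes} ∪ {4} and let N = ∏_{m ∈ T} m. Then there exists σ ∈ Gal(E(ζ_N)/E) such that σ(ζ_ℓ) ≠ ζ_ℓ for every ℓ ∈ T ∩ {3,4}. -/
/-- The ring `ℤ[1/2]`, realized as the smallest subring of `ℚ` containing `1/2`. -/
def Zhalf : Subring ℚ := Subring.closure {(2 : ℚ)⁻¹}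

/-! The Galois group of `E(ζ_N)/E` moves `ζ_3` (if `3 ∈ T`) because `(2ζ_3 + 1)² = -3` and `E`
contains no square root of `-3`; likewise it moves `ζ_4` because `ζ_4² = -1`. So the stabilizers of
`ζ_3` and `ζ_4` are proper subgroups, and a group is never the union of two proper subgroups. -/

namespace Subgroup

variable {G : Type*} [Group G]

theorem exists_notMem_notMem {H K : Subgroup G} (hH : H ≠ ⊤) (hK : K ≠ ⊤) :
    ∃ g, g ∉ H ∧ g ∉ K := by
  obtain ⟨a, -, haH⟩ := SetLike.exists_of_lt (lt_top_iff_ne_top.2 hH)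
  obtain ⟨b, -, hbK⟩ := SetLike.exists_of_lt (lt_top_iff_ne_top.2 hK)
  by_cases haK : a ∈ K
  · by_cases hbH : b ∈ H
    · exact ⟨a * b, fun h => haH ((H.mul_mem_cancel_right hbH).1 h),
        fun h => hbK ((K.mul_mem_cancel_left haK).1 h)⟩
    · exact ⟨b, hbH, hbK⟩
  · exact ⟨a, haH, haK⟩

theorem exists_notMem_of_ne_top (H K : Subgroup G) :
    ∃ g, (H ≠ ⊤ → g ∉ H) ∧ (K ≠ ⊤ → g ∉ K) := by
  by_cases hH : H = ⊤ <;> by_cases hK : K = ⊤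
  · exact ⟨1, fun h => (h hH).elim, fun h => (h hK).elim⟩
  · obtain ⟨b, -, hb⟩ := SetLike.exists_of_lt (lt_top_iff_ne_top.2 hK)
    exact ⟨b, fun h => (h hH).elim, fun _ => hb⟩
  · obtain ⟨a, -, ha⟩ := SetLike.exists_of_lt (lt_top_iff_ne_top.2 hH)
    exact ⟨a, fun _ => ha, fun h => (h hK).elim⟩
  · obtain ⟨g, hgH, hgK⟩ := exists_notMem_notMem hH hK
    exact ⟨g, fun _ => hgH, fun _ => hgK⟩

end Subgroup

namespace IsPrimitiveRoot

variable {R : Type*} [CommRing R] [IsDomain R] {η : R}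

theorem sq_eq_neg_one_of_four (h : IsPrimitiveRoot η 4) : η ^ 2 = -1 :=
  (h.pow_of_dvd two_ne_zero (by norm_num)).eq_neg_one_of_two_right

theorem two_mul_add_one_sq_of_three (h : IsPrimitiveRoot η 3) : (2 * η + 1) ^ 2 = -3 := by
  have h_sum := h.geom_sum_eq_zero (by norm_num)
  simp only [Finset.sum_range_succ, Finset.sum_range_zero] at h_sum
  linear_combination 4 * h_sum

theorem notMem_of_four {S : Type*} [SetLike S R] {s : S} (hs : ∀ w ∈ s, w ^ 2 ≠ -1)
    (h : IsPrimitiveRoot η 4) : η ∉ s :=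
  fun hη => hs η hη h.sq_eq_neg_one_of_four

theorem notMem_of_three {S : Type*} [SetLike S R] [SubringClass S R] {s : S}
    (hs : ∀ w ∈ s, w ^ 2 ≠ -3) (h : IsPrimitiveRoot η 3) : η ∉ s :=
  fun hη => hs (2 * η + 1) (add_mem (mul_mem (by simp) hη) (one_mem s))
    h.two_mul_add_one_sq_of_three

theorem isCyclotomicExtension_adjoin {K L : Type*} [Field K] [Field L] [Algebra K L] {n : ℕ}
    [NeZero n] {ζ : L} (hζ : IsPrimitiveRoot ζ n) :
    IsCyclotomicExtension {n} K (IntermediateField.adjoin K {ζ}) := by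
  have hint : IsIntegral K ζ := (hζ.isIntegral (NeZero.pos n)).tower_top
  change IsCyclotomicExtension {n} K (IntermediateField.adjoin K {ζ}).toSubalgebra
  rw [IntermediateField.adjoin_simple_toSubalgebra_of_isAlgebraic hint.isAlgebraic]
  exact hζ.adjoin_isCyclotomicExtension K

end IsPrimitiveRoot

theorem IsGalois.stabilizer_ne_top_of_notMem_bot {F K : Type*} [Field F] [Field K] [Algebra F K]
    [IsGalois F K] [FiniteDimensional F K] {x : K} (hx : x ∉ (⊥ : IntermediateField F K)) :
    MulAction.stabilizer Gal(K/F) x ≠ ⊤ := fun h =>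
  hx <| (IsGalois.mem_bot_iff_fixed x).2 fun f =>
    MulAction.mem_stabilizer_iff.1 (h ▸ Subgroup.mem_top f)

theorem stmt11_general
    (E : IntermediateField ℚ ℂ)
    (hm1 : ∀ w ∈ E, w ^ 2 ≠ -1) (hm3 : ∀ w ∈ E, w ^ 2 ≠ -3)
    (T : Finset ℕ) (hT : ∀ ℓ ∈ T, (Nat.Prime ℓ ∧ ℓ ≠ 2) ∨ ℓ = 4)
    (N : ℕ) (hN : N = ∏ m ∈ T, m)
    (ζ : ℂ) (hζ : IsPrimitiveRoot ζ N) :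
    ∃ σ : (↥(IntermediateField.adjoin ↥E {ζ}) ≃ₐ[↥E] ↥(IntermediateField.adjoin ↥E {ζ})),
      ∀ ℓ ∈ T, (ℓ = 3 ∨ ℓ = 4) →
        ∀ h : ζ ^ (N / ℓ) ∈ IntermediateField.adjoin ↥E {ζ},
          ((σ ⟨ζ ^ (N / ℓ), h⟩ : ↥(IntermediateField.adjoin ↥E {ζ})) : ℂ) ≠ ζ ^ (N / ℓ) := by
  have : NeZero N := ⟨by
    rw [hN, Finset.prod_ne_zero_iff]
    intro m hm
    rcases hT m hm with ⟨hp, -⟩ | rfl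
    exacts [hp.ne_zero, four_ne_zero]⟩
  set L := IntermediateField.adjoin E {ζ}
  have : IsCyclotomicExtension {N} E L := hζ.isCyclotomicExtension_adjoin
  have := IsCyclotomicExtension.finiteDimensional {N} E L
  have := IsCyclotomicExtension.isGalois {N} E L
  let x (ℓ : ℕ) : L := ⟨ζ ^ (N / ℓ), pow_mem (IntermediateField.mem_adjoin_simple_self E ζ) _⟩
  have hx : ∀ ℓ ∈ T, (ℓ = 3 ∨ ℓ = 4) → MulAction.stabilizer Gal(L/E) (x ℓ) ≠ ⊤ := by
    intro ℓ hℓ hℓ34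
    have hroot : IsPrimitiveRoot (ζ ^ (N / ℓ)) ℓ :=
      hζ.pow (NeZero.pos N) (Nat.div_mul_cancel (hN ▸ Finset.dvd_prod_of_mem _ hℓ)).symm
    refine IsGalois.stabilizer_ne_top_of_notMem_bot fun hbot => ?_
    obtain ⟨e, he⟩ := IntermediateField.mem_bot.1 hbot
    have hmem : ζ ^ (N / ℓ) ∈ E := by
      rw [← show (e : ℂ) = ζ ^ (N / ℓ) from congrArg Subtype.val he]
      exact e.2
    rcases hℓ34 with rfl | rfl
    exacts [hroot.notMem_of_three hm3 hmem, hroot.notMem_of_four hm1 hmem]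
  obtain ⟨σ, hσ3, hσ4⟩ :=
    Subgroup.exists_notMem_of_ne_top (MulAction.stabilizer Gal(L/E) (x 3))
      (MulAction.stabilizer Gal(L/E) (x 4))
  refine ⟨σ, ?_⟩
  rintro ℓ hℓ (rfl | rfl) _ hfix
  exacts [hσ3 (hx 3 hℓ (.inl rfl)) (Subtype.ext hfix),
    hσ4 (hx 4 hℓ (.inr rfl)) (Subtype.ext hfix)]

theorem stmt11 (t : ↥Zhalf)
    (z7 zt : ℂ) (hz7 : z7 ^ 2 = -7) (hzt : zt ^ 2 = -((t : ℚ) : ℂ))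
    (E : IntermediateField ℚ ℂ) (hE : E = IntermediateField.adjoin ℚ {z7, zt})
    (hdeg : Module.finrank ℚ ↥E = 4)
    (h3 : ∀ w ∈ E, w ^ 2 ≠ 3) (hm1 : ∀ w ∈ E, w ^ 2 ≠ -1) (hm3 : ∀ w ∈ E, w ^ 2 ≠ -3)
    (T : Finset ℕ) (hT : ∀ ℓ ∈ T, (Nat.Prime ℓ ∧ ℓ ≠ 2) ∨ ℓ = 4)
    (N : ℕ) (hN : N = ∏ m ∈ T, m)
    (ζ : ℂ) (hζ : IsPrimitiveRoot ζ N) :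
    ∃ σ : (↥(IntermediateField.adjoin ↥E {ζ}) ≃ₐ[↥E] ↥(IntermediateField.adjoin ↥E {ζ})),
      ∀ ℓ ∈ T, (ℓ = 3 ∨ ℓ = 4) →
        ∀ h : ζ ^ (N / ℓ) ∈ IntermediateField.adjoin ↥E {ζ},
          ((σ ⟨ζ ^ (N / ℓ), h⟩ : ↥(IntermediateField.adjoin ↥E {ζ})) : ℂ) ≠ ζ ^ (N / ℓ) :=
  stmt11_general E hm1 hm3 T hT N hN ζ hζ
end

section
/- Let K be a number field, let n ≥ 12, and let q be a non-degenerate anisotropic quadratic form on Kⁿ. Let γ be an element of the orthogonal group O_q(K), and let a,b,c ∈ Kⁿ be non-isotropic vectors (q(a), q(b), q(c) ≠ 0) such that q(a) = q(b) = q(c) and ⟨a, γa⟩ = ⟨a, c⟩ = ⟨b, c⟩, where ⟨·,·⟩ is the polar bilinear form of q. Then there exists δ ∈ (gcl_{O_q(K)}(γ))², the set of products of two elements of the generalized conjugacy class of γ, such that δa = b. -/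
open Pointwise

/-- The orthogonal group of a quadratic form `Q`, as a subgroup of the general linear
group: the invertible linear automorphisms preserving `Q`. -/
def orthogonalSubgroup {K V : Type*} [Field K] [AddCommGroup V] [Module K V]
    (Q : QuadraticForm K V) : Subgroup (LinearMap.GeneralLinearGroup K V) where
  carrier := {g | ∀ v : V, Q ((g : V →ₗ[K] V) v) = Q v}
  one_mem' := by
    intro v
    rw [Units.val_one, Module.End.one_apply]
  mul_mem' := by
    intro g h hg hh v
    rw [Units.val_mul, Module.End.mul_apply, hg, hh]
  inv_mem' := by
    intro g hg v
    have h1 : (↑g : V →ₗ[K] V) ((↑g⁻¹ : V →ₗ[K] V) v) = v := by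
      rw [← Module.End.mul_apply, g.mul_inv, Module.End.one_apply]
    conv_rhs => rw [← h1]
    exact (hg _).symm

/-- The generalized conjugacy class of `g`: the union of the conjugacy class of `g`,
the conjugacy class of `g⁻¹`, and `{1}`. -/
def gcl {G : Type*} [Group G] (g : G) : Set G :=
  {x | x = 1 ∨ ∃ h : G, x = h * g * h⁻¹ ∨ x = h * g⁻¹ * h⁻¹}

/-!
Reflections in anisotropic vectors make the orthogonal group act transitively on pairs
`(x, y)` with prescribed `q x`, `q y` and `⟨x, y⟩`: reflect `x` to `x'`, then reflect the
image of `y` to `y'` along a vector orthogonal to `x'`. Since `⟨a, c⟩ = ⟨c, b⟩ = ⟨a, γ a⟩`,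
this gives a conjugate of `γ` sending `a` to `c` and another sending `c` to `b`; their
product is `δ`.
-/

open QuadraticMap

namespace QuadraticForm

variable {K V : Type*} [Field K] [AddCommGroup V] [Module K V] {Q : QuadraticForm K V}

lemma map_sub_eq_sub_polar (x y : V) : Q (x - y) = Q x + Q y - polar Q x y := by
  rw [sub_eq_add_neg, QuadraticMap.map_add (⇑Q), QuadraticMap.map_neg, polar_neg_right]
  ring

variable (Q) in
noncomputable def reflection {v : V} (hv : Q v ≠ 0) : V ≃ₗ[K] V :=
  Module.reflection (f := (Q v)⁻¹ • polarBilin Q v) (x := v) <| by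
    rw [LinearMap.smul_apply, polarBilin_apply_apply, polar_self, smul_eq_mul, two_nsmul]
    field_simp
    ring

lemma reflection_apply {v : V} (hv : Q v ≠ 0) (x : V) :
    Q.reflection hv x = x - ((Q v)⁻¹ * polar Q v x) • v := rfl

lemma map_reflection {v : V} (hv : Q v ≠ 0) (x : V) : Q (Q.reflection hv x) = Q x := by
  rw [reflection_apply, map_sub_eq_sub_polar, QuadraticMap.map_smul, polar_smul_right, polar_comm,
    smul_eq_mul, smul_eq_mul]
  field_simp
  ring

lemma reflection_apply_of_polar_eq_zero {v : V} (hv : Q v ≠ 0) {x : V} (hx : polar Q v x = 0) :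
    Q.reflection hv x = x := by
  rw [reflection_apply, hx, mul_zero, zero_smul, sub_zero]

lemma reflection_sub_apply_of_map_eq {x y : V} (hxy : Q (x - y) ≠ 0) (h : Q x = Q y) :
    Q.reflection hxy x = y := by
  have : polar Q (x - y) x = Q (x - y) := by
    rw [polar_sub_left, polar_self, map_sub_eq_sub_polar, polar_comm, h, two_nsmul]
  rw [reflection_apply, this, inv_mul_cancel₀ hxy, one_smul, sub_sub_cancel]

lemma map_smul_of_mem_orthogonalSubgroup (g : orthogonalSubgroup Q) (x : V) : Q (g • x) = Q x :=
  g.2 x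

lemma polar_smul_smul_of_mem_orthogonalSubgroup (g : orthogonalSubgroup Q) (x y : V) :
    polar Q (g • x) (g • y) = polar Q x y := by
  simp only [polar, ← smul_add, map_smul_of_mem_orthogonalSubgroup]

lemma exists_smul_eq_of_map_eq (hQ : Q.Anisotropic) {x y : V} (h : Q x = Q y) :
    ∃ g : orthogonalSubgroup Q, g • x = y ∧ ∀ z, polar Q (x - y) z = 0 → g • z = z := by
  rcases eq_or_ne x y with rfl | hne
  · exact ⟨1, one_smul _ x, fun z _ => one_smul _ z⟩
  have hxy : Q (x - y) ≠ 0 := fun h0 => hne (sub_eq_zero.mp (hQ _ h0))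
  exact ⟨⟨.ofLinearEquiv (Q.reflection hxy), map_reflection hxy⟩,
    reflection_sub_apply_of_map_eq hxy h, fun z hz => reflection_apply_of_polar_eq_zero hxy hz⟩

lemma exists_smul_eq_smul_eq (hQ : Q.Anisotropic) {x y x' y' : V} (hx : Q x = Q x')
    (hy : Q y = Q y') (hxy : polar Q x y = polar Q x' y') :
    ∃ g : orthogonalSubgroup Q, g • x = x' ∧ g • y = y' := by
  obtain ⟨g₁, hg₁x, -⟩ := exists_smul_eq_of_map_eq hQ hx
  obtain ⟨g₂, hg₂y, hg₂fix⟩ := exists_smul_eq_of_map_eq hQ (x := g₁ • y) (y := y')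
    (by rw [map_smul_of_mem_orthogonalSubgroup, hy])
  have hg₂x' : g₂ • x' = x' := hg₂fix x' <| calc
    polar Q (g₁ • y - y') x' = polar Q (g₁ • y) (g₁ • x) - polar Q y' x' := by
      rw [polar_sub_left, hg₁x]
    _ = 0 := by
      rw [polar_smul_smul_of_mem_orthogonalSubgroup, polar_comm, hxy, polar_comm, sub_self]
  exact ⟨g₂ * g₁, by rw [mul_smul, hg₁x, hg₂x'], by rw [mul_smul, hg₂y]⟩

lemma exists_conj_smul_eq (hQ : Q.Anisotropic) (g : orthogonalSubgroup Q) {a x y : V}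
    (hx : Q a = Q x) (hy : Q a = Q y) (hxy : polar Q a (g • a) = polar Q x y) :
    ∃ h : orthogonalSubgroup Q, (h * g * h⁻¹) • x = y := by
  obtain ⟨h, rfl, hga⟩ := exists_smul_eq_smul_eq hQ hx
    (by rw [map_smul_of_mem_orthogonalSubgroup, hy]) hxy
  exact ⟨h, by rw [mul_smul, mul_smul, inv_smul_smul, hga]⟩

end QuadraticForm

lemma conj_mem_gcl {G : Type*} [Group G] (g h : G) : h * g * h⁻¹ ∈ gcl g :=
  Or.inr ⟨h, Or.inl rfl⟩

theorem stmt13_general {K : Type*} [Field K] {n : ℕ}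
    (Q : QuadraticForm K (Fin n → K))
    (hanis : Q.Anisotropic)
    (γ : orthogonalSubgroup Q) (a b c : Fin n → K)
    (hab : Q a = Q b) (hac : Q a = Q c)
    (h1 : QuadraticMap.polar ⇑Q a
        (((γ : LinearMap.GeneralLinearGroup K (Fin n → K)) : (Fin n → K) →ₗ[K] (Fin n → K)) a)
      = QuadraticMap.polar ⇑Q a c)
    (h2 : QuadraticMap.polar ⇑Q a c = QuadraticMap.polar ⇑Q b c) :
    ∃ δ ∈ (gcl γ) ^ 2,
      (((δ : orthogonalSubgroup Q) : LinearMap.GeneralLinearGroup K (Fin n → K))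
        : (Fin n → K) →ₗ[K] (Fin n → K)) a = b := by
  obtain ⟨h₁, h₁a⟩ := QuadraticForm.exists_conj_smul_eq hanis γ rfl hac h1
  obtain ⟨h₂, h₂c⟩ := QuadraticForm.exists_conj_smul_eq hanis γ hac hab
    (h1.trans <| h2.trans <| polar_comm _ _ _)
  refine ⟨(h₂ * γ * h₂⁻¹) * (h₁ * γ * h₁⁻¹), ?_, ?_⟩
  · rw [pow_two]
    exact Set.mul_mem_mul (conj_mem_gcl γ h₂) (conj_mem_gcl γ h₁)
  · exact (mul_smul _ _ a).trans (by rw [h₁a, h₂c])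

theorem stmt13 {K : Type*} [Field K] [NumberField K] {n : ℕ} (hn : 12 ≤ n)
    (Q : QuadraticForm K (Fin n → K))
    (hanis : Q.Anisotropic)
    (hnondeg : ∀ u : Fin n → K, (∀ v, QuadraticMap.polar ⇑Q u v = 0) → u = 0)
    (γ : orthogonalSubgroup Q) (a b c : Fin n → K)
    (ha : Q a ≠ 0) (hb : Q b ≠ 0) (hc : Q c ≠ 0)
    (hab : Q a = Q b) (hac : Q a = Q c)
    (h1 : QuadraticMap.polar ⇑Q a
        (((γ : LinearMap.GeneralLinearGroup K (Fin n → K)) : (Fin n → K) →ₗ[K] (Fin n → K)) a)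
      = QuadraticMap.polar ⇑Q a c)
    (h2 : QuadraticMap.polar ⇑Q a c = QuadraticMap.polar ⇑Q b c) :
    ∃ δ ∈ (gcl γ) ^ 2,
      (((δ : orthogonalSubgroup Q) : LinearMap.GeneralLinearGroup K (Fin n → K))
        : (Fin n → K) →ₗ[K] (Fin n → K)) a = b :=
  stmt13_general Q hanis γ a b c hab hac h1 h2
end

section
/- Let a₁, a₂ ∈ ℚ^× and let I be a nonzero ideal of ℤ[1/2]. Then there exist: an element t ∈ ℤ[1/2] with t > 0; rationals x₁,y₁,x₂,y₂ with xᵢ² + t·yᵢ² = 1 for i = 1,2; finite sets R₁, R₂ of odd primes; and, for every prime p ∈ P(I) ∪ R₁ ∪ R₂, an element ζ_p ∈ ℤ_p with ζ_p² = −t; such that, with L := ℚ(√−t) and zᵢ := xᵢ + yᵢ√−t ∈ L: (1) for i = 1,2 and every p ∈ P(I), v_p((xᵢ + yᵢ·ζ_p)·aᵢ⁻¹ − 1) ≥ v_p(I); (2) the four sets P(I), R₁, R₂, and P(t) := {odd primes p : v_p(t) > 0} are pairwise disjoint; (3) for i = 1,2, for every odd prime p ∉ P(I) ∪ Rᵢ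 and every prime ideal 𝔮 of the ring of integers of L lying over p, the 𝔮-adic valuation of zᵢ is 0. Here P(I) := {odd primes p : I ⊆ pℤ[1/2]} and v_p(I) := max{e ∈ ℕ : I ⊆ p^e ℤ[1/2]}. -/
/-
Take `t = 3 ∏_{p ∈ P(I)} p - 1`: then `-t ≡ 1` modulo every `p ∈ P(I)`, so Hensel's lemma gives
`ζ_p`. Norm-one elements are `z = (c + d√-t) / (c - d√-t)` with `c, d ∈ ℚ`. By weak approximation,
`(c, d)` is chosen `p`-adically close to `((a + 1) / 2, (a - 1) / (2 ζ_p))` for `p ∈ P(I)`, which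
makes `z` close to `a`, and close to `(1, 0)` at the primes of `t` (and of `R₁`, for the second
element), which makes `x, y` integral there. An odd prime dividing a denominator of `x` or `y` divides
`C² + t D²` for coprime integers with `C : D = c : d`, so `-t` is a nonzero square modulo it and
`ζ_q` exists; these primes form `Rᵢ`. Away from `P(I) ∪ Rᵢ`, `z` and its conjugate `z⁻¹` are both
integral, so `z` is a unit.
-/

namespace Zhalf

lemma exists_eq_intCast_div_two_pow {x : ℚ} (hx : x ∈ Zhalf) :
    ∃ (n : ℤ) (k : ℕ), x = n / 2 ^ k := by
  induction hx using Subring.closure_induction with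
  | mem x hx => exact ⟨1, 1, by simp_all⟩
  | zero => exact ⟨0, 0, by simp⟩
  | one => exact ⟨1, 0, by simp⟩
  | add x y _ _ hx hy =>
    obtain ⟨n, k, rfl⟩ := hx
    obtain ⟨n', k', rfl⟩ := hy
    exact ⟨n * 2 ^ k' + n' * 2 ^ k, k + k', by push_cast; field_simp; ring⟩
  | neg x _ hx =>
    obtain ⟨n, k, rfl⟩ := hx
    exact ⟨-n, k, by push_cast; ring⟩
  | mul x y _ _ hx hy =>
    obtain ⟨n, k, rfl⟩ := hx
    obtain ⟨n', k', rfl⟩ := hy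
    exact ⟨n * n', k + k', by push_cast; ring⟩

lemma pow_dvd_int_of_pow_dvd {p : ℕ} (hp : p.Prime) (hp2 : p ≠ 2) {e k : ℕ} {g : Zhalf} {m : ℤ}
    (hg : (g : ℚ) = m / 2 ^ k) (h : (p : Zhalf) ^ e ∣ g) : (p : ℤ) ^ e ∣ m := by
  obtain ⟨h, rfl⟩ := h
  obtain ⟨n, j, hn⟩ := exists_eq_intCast_div_two_pow h.2
  have hmn : m * 2 ^ j = (p : ℤ) ^ e * (n * 2 ^ k) := by
    have : (m : ℚ) / 2 ^ k = p ^ e * (n / 2 ^ j) := by rw [← hn, ← hg]; push_cast; ring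
    field_simp at this
    exact_mod_cast (show ((m * 2 ^ j : ℤ) : ℚ) = ((p : ℤ) ^ e * (n * 2 ^ k) : ℤ) by
      push_cast; linear_combination this)
  have hcop : IsCoprime ((p : ℤ) ^ e) (2 ^ j) :=
    (Nat.isCoprime_iff_coprime.2 ((Nat.coprime_primes hp Nat.prime_two).2 hp2)).pow
  exact hcop.dvd_of_dvd_mul_right ⟨_, hmn⟩

lemma exists_primes_and_bound_of_ne_bot (I : Ideal Zhalf) (hI : I ≠ ⊥) :
    ∃ (P : Finset ℕ) (E : ℕ → ℕ),
      (∀ p, p ∈ P ↔ p.Prime ∧ p ≠ 2 ∧ I ≤ Ideal.span {(p : Zhalf)}) ∧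
      ∀ (p : ℕ) e, p.Prime → p ≠ 2 → I ≤ Ideal.span {(p : Zhalf)} ^ e → e ≤ E p := by
  classical
  obtain ⟨g, hgI, hg0⟩ := Submodule.exists_mem_ne_zero_of_ne_bot hI
  obtain ⟨m, k, hg⟩ := exists_eq_intCast_div_two_pow g.2
  have hm : m.natAbs ≠ 0 := fun h => hg0 (Subtype.ext (by simp_all))
  have hdvd : ∀ (p : ℕ) e, p.Prime → p ≠ 2 → I ≤ Ideal.span {(p : Zhalf)} ^ e →
      p ^ e ∣ m.natAbs := by
    intro p e hp hp2 hle
    have hg' := hle hgI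
    rw [Ideal.span_singleton_pow, Ideal.mem_span_singleton] at hg'
    exact Int.natCast_dvd.1 (by exact_mod_cast pow_dvd_int_of_pow_dvd hp hp2 hg hg')
  refine ⟨m.natAbs.primeFactors.filter (fun p => p ≠ 2 ∧ I ≤ Ideal.span {(p : Zhalf)}),
    m.natAbs.factorization, fun p => ?_, fun p e hp hp2 hle =>
      (hp.pow_dvd_iff_le_factorization hm).1 (hdvd p e hp hp2 hle)⟩
  simp only [Finset.mem_filter, Nat.mem_primeFactors]
  constructor
  · rintro ⟨⟨hp, -, -⟩, h⟩
    exact ⟨hp, h⟩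
  · rintro ⟨hp, hp2, hle⟩
    exact ⟨⟨hp, by simpa using hdvd p 1 hp hp2 (by simpa using hle), hm⟩, hp2, hle⟩

end Zhalf

lemma exists_int_pow_dvd_sub_one_and_pow_dvd {p : ℕ} (hp : p.Prime) (W : Finset ℕ)
    (hW : ∀ q ∈ W, q.Prime) (hpW : p ∉ W) (M : ℕ) :
    ∃ E : ℤ, (p : ℤ) ^ M ∣ E - 1 ∧ ∀ q ∈ W, (q : ℤ) ^ M ∣ E := by
  have hcop : IsCoprime ((∏ q ∈ W, q : ℕ) : ℤ) p := Nat.isCoprime_iff_coprime.2 <|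
    Nat.Coprime.prod_left fun q hq =>
      (Nat.coprime_primes (hW q hq) hp).2 fun h => hpW (h ▸ hq)
  obtain ⟨a, b, hab⟩ := hcop.pow (m := M) (n := M)
  refine ⟨a * (∏ q ∈ W, q : ℕ) ^ M, ⟨-b, by linear_combination hab⟩, fun q hq => ?_⟩
  exact Dvd.dvd.mul_left (pow_dvd_pow_of_dvd (by exact_mod_cast Finset.dvd_prod_of_mem _ hq) M) a

open Filter in
lemma exists_nat_forall_mul_zpow_le (W : Finset ℕ) (hW : ∀ q ∈ W, 1 < q) (C ε : ℕ → ℝ)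
    (hε : ∀ q ∈ W, 0 < ε q) : ∃ M : ℕ, ∀ q ∈ W, C q * (q : ℝ) ^ (-(M : ℤ)) ≤ ε q := by
  have : ∀ q ∈ W, ∀ᶠ M : ℕ in atTop, C q * (q : ℝ) ^ (-(M : ℤ)) ≤ ε q := by
    intro q hq
    have hlim : Tendsto (fun M : ℕ => C q * ((q : ℝ)⁻¹) ^ M) atTop (nhds (C q * 0)) :=
      (tendsto_pow_atTop_nhds_zero_of_lt_one (by positivity)
        (inv_lt_one_of_one_lt₀ (by exact_mod_cast hW q hq))).const_mul _
    rw [mul_zero] at hlim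
    filter_upwards [(tendsto_order.1 hlim).2 _ (hε q hq)] with M hM
    simpa [zpow_neg, inv_pow] using hM.le
  exact ((eventually_all_finset W).2 this).exists

theorem Rat.exists_forall_norm_sub_le (W : Finset ℕ) (hW : ∀ p ∈ W, p.Prime)
    (b : ∀ (p : ℕ) [Fact p.Prime], ℚ_[p]) (ε : ∀ (p : ℕ) [Fact p.Prime], ℝ)
    (hε : ∀ p ∈ W, ∀ [Fact p.Prime], 0 < ε p) :
    ∃ r : ℚ, ∀ p ∈ W, ∀ [Fact p.Prime], ‖(r : ℚ_[p]) - b p‖ ≤ ε p := by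
  classical
  induction W using Finset.induction_on with
  | empty => exact ⟨0, by simp⟩
  | @insert p W hpW ih =>
    have hp : p.Prime := hW p (W.mem_insert_self p)
    have := Fact.mk hp
    obtain ⟨s, hs⟩ := ih (fun q hq => hW q (W.mem_insert_of_mem hq))
      (fun q hq => hε q (W.mem_insert_of_mem hq))
    obtain ⟨r', hr'⟩ := Padic.rat_dense (p := p) (b p) (hε p (W.mem_insert_self p))
    obtain ⟨M, hM⟩ := exists_nat_forall_mul_zpow_le (insert p W) (fun q hq => (hW q hq).one_lt)
      (fun q => if hq : q.Prime then have := Fact.mk hq; ‖((r' - s : ℚ) : ℚ_[q])‖ else 0)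
      (fun q => if hq : q.Prime then have := Fact.mk hq; ε q else 1)
      (fun q hq => by have := Fact.mk (hW q hq); simpa [hW q hq] using hε q hq)
    obtain ⟨E, hE1, hE⟩ := exists_int_pow_dvd_sub_one_and_pow_dvd hp W
      (fun q hq => hW q (W.mem_insert_of_mem hq)) hpW M
    -- `E` is `p`-adically close to `1` and `q`-adically close to `0` for `q ∈ W`.
    refine ⟨s + (r' - s) * E, fun q hq _ => ?_⟩
    have hMq := hM q hq
    simp only [dif_pos (hW q hq)] at hMq
    rcases Finset.mem_insert.1 hq with rfl | hq
    · have hE1 : ‖(E : ℚ_[q]) - 1‖ ≤ (q : ℝ) ^ (-(M : ℤ)) := by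
        simpa using (Padic.norm_int_le_pow_iff_dvd (E - 1) M).2 hE1
      calc ‖((s + (r' - s) * E : ℚ) : ℚ_[q]) - b q‖
          = ‖((r' - s : ℚ) : ℚ_[q]) * ((E : ℚ_[q]) - 1) + ((r' : ℚ_[q]) - b q)‖ := by
            push_cast; ring_nf
        _ ≤ max (‖((r' - s : ℚ) : ℚ_[q])‖ * (q : ℝ) ^ (-(M : ℤ))) ‖(r' : ℚ_[q]) - b q‖ := by
            refine (IsUltrametricDist.norm_add_le_max _ _).trans (max_le_max ?_ le_rfl)
            rw [norm_mul]
            exact mul_le_mul_of_nonneg_left hE1 (norm_nonneg _)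
        _ ≤ ε q := max_le hMq (by rw [← norm_neg, neg_sub]; exact hr'.le)
    · have hE : ‖(E : ℚ_[q])‖ ≤ (q : ℝ) ^ (-(M : ℤ)) := by
        simpa using (Padic.norm_int_le_pow_iff_dvd E M).2 (hE q hq)
      calc ‖((s + (r' - s) * E : ℚ) : ℚ_[q]) - b q‖
          = ‖((s : ℚ_[q]) - b q) + ((r' - s : ℚ) : ℚ_[q]) * E‖ := by push_cast; ring_nf
        _ ≤ max ‖(s : ℚ_[q]) - b q‖ (‖((r' - s : ℚ) : ℚ_[q])‖ * (q : ℝ) ^ (-(M : ℤ))) := by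
            refine (IsUltrametricDist.norm_add_le_max _ _).trans (max_le_max le_rfl ?_)
            rw [norm_mul]
            exact mul_le_mul_of_nonneg_left hE (norm_nonneg _)
        _ ≤ ε q := max_le (hs q hq) hMq

open Polynomial in
lemma PadicInt.exists_sq_eq_neg_of_dvd {p : ℕ} [Fact p.Prime] (hp2 : p ≠ 2) {t u : ℤ}
    (h : (p : ℤ) ∣ u ^ 2 + t) (hu : ¬ (p : ℤ) ∣ u) : ∃ z : ℤ_[p], z ^ 2 = -t := by
  have hderiv : ‖aeval (u : ℤ_[p]) (derivative (X ^ 2 + C (t : ℤ_[p])))‖ = 1 := by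
    have h2 : IsCoprime (2 : ℤ) p := by
      exact_mod_cast Nat.isCoprime_iff_coprime.2 ((Nat.coprime_primes Nat.prime_two Fact.out).2
        hp2.symm)
    have h2u : IsCoprime (2 * u) p := h2.mul_left
      ((Prime.coprime_iff_not_dvd (Nat.prime_iff_prime_int.1 Fact.out)).2 hu).symm
    simpa [derivative_X_pow, one_add_one_eq_two] using PadicInt.norm_intCast_eq_one_iff.2 h2u
  obtain ⟨z, hz, -⟩ := hensels_lemma (F := X ^ 2 + C (t : ℤ_[p])) (a := (u : ℤ_[p])) (by
    rw [hderiv, one_pow]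
    simpa using (PadicInt.norm_int_lt_one_iff_dvd _).2 h)
  exact ⟨z, by simpa [add_eq_zero_iff_eq_neg] using hz⟩

-- Junk value `0` when `-t` is not a square in `ℤ_[p]`.
open scoped Classical in
noncomputable def sqrtNeg (t p : ℕ) [Fact p.Prime] : ℤ_[p] :=
  if h : ∃ z : ℤ_[p], z ^ 2 = -t then h.choose else 0

lemma sqrtNeg_sq {t p : ℕ} [Fact p.Prime] (h : ∃ z : ℤ_[p], z ^ 2 = -t) :
    sqrtNeg t p ^ 2 = -t := by
  rw [sqrtNeg, dif_pos h]
  exact h.choose_spec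

section Cayley

variable {K : Type*} [Field K]

/-- The rational parametrization `x + y √-t = (c + d √-t) / (c - d √-t)` of `x² + t y² = 1`. -/
def cayleyRe (t c d : K) : K := (c ^ 2 - t * d ^ 2) / (c ^ 2 + t * d ^ 2)

def cayleyIm (t c d : K) : K := 2 * c * d / (c ^ 2 + t * d ^ 2)

lemma cayleyRe_sq_add_mul_cayleyIm_sq {t c d : K} (h : c ^ 2 + t * d ^ 2 ≠ 0) :
    cayleyRe t c d ^ 2 + t * cayleyIm t c d ^ 2 = 1 := by
  rw [cayleyRe, cayleyIm]
  field_simp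
  ring

lemma cayleyRe_add_cayleyIm_mul {t c d ζ : K} (hζ : ζ ^ 2 = -t) (h : c ^ 2 + t * d ^ 2 ≠ 0) :
    cayleyRe t c d + cayleyIm t c d * ζ = (c + d * ζ) / (c - d * ζ) := by
  have hfac : c ^ 2 + t * d ^ 2 = (c + d * ζ) * (c - d * ζ) := by linear_combination d ^ 2 * hζ
  rw [hfac] at h
  have hu := left_ne_zero_of_mul h
  have hw := right_ne_zero_of_mul h
  rw [cayleyRe, cayleyIm, hfac]
  field_simp
  linear_combination (-d ^ 2) * hζ

lemma cayleyRe_mul_mul {t c d s : K} (hs : s ≠ 0) :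
    cayleyRe t (s * c) (s * d) = cayleyRe t c d := by
  rw [cayleyRe, cayleyRe, show (s * c) ^ 2 - t * (s * d) ^ 2 = s ^ 2 * (c ^ 2 - t * d ^ 2) by ring,
    show (s * c) ^ 2 + t * (s * d) ^ 2 = s ^ 2 * (c ^ 2 + t * d ^ 2) by ring,
    mul_div_mul_left _ _ (pow_ne_zero 2 hs)]

lemma cayleyIm_mul_mul {t c d s : K} (hs : s ≠ 0) :
    cayleyIm t (s * c) (s * d) = cayleyIm t c d := by
  rw [cayleyIm, cayleyIm, show 2 * (s * c) * (s * d) = s ^ 2 * (2 * c * d) by ring,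
    show (s * c) ^ 2 + t * (s * d) ^ 2 = s ^ 2 * (c ^ 2 + t * d ^ 2) by ring,
    mul_div_mul_left _ _ (pow_ne_zero 2 hs)]

@[simp, norm_cast]
lemma Rat.cast_cayleyRe [CharZero K] (t c d : ℚ) :
    ((cayleyRe t c d : ℚ) : K) = cayleyRe (t : K) c d := by
  simp [cayleyRe]

@[simp, norm_cast]
lemma Rat.cast_cayleyIm [CharZero K] (t c d : ℚ) :
    ((cayleyIm t c d : ℚ) : K) = cayleyIm (t : K) c d := by
  simp [cayleyIm]

end Cayley

lemma Int.exists_sq_add_dvd_of_dvd_sq_add_mul_sq {q t C D : ℤ} (hq : Prime q) (hCD : IsCoprime C D)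
    (h : q ∣ C ^ 2 + t * D ^ 2) (ht : ¬ q ∣ t) : ∃ u, q ∣ u ^ 2 + t ∧ ¬ q ∣ u := by
  have hD : ¬ q ∣ D := fun hD => hq.not_isUnit <| hCD.isUnit_of_dvd'
    (hq.dvd_of_dvd_pow (n := 2) (by simpa using h.sub (hD.pow two_ne_zero |>.mul_left t))) hD
  obtain ⟨a, b, hab⟩ := (Prime.coprime_iff_not_dvd hq).2 hD
  -- `u = C D⁻¹` modulo `q`
  have hu : q ∣ (C * b) ^ 2 + t := by
    have : (C * b) ^ 2 + t = b ^ 2 * (C ^ 2 + t * D ^ 2) + q * (t * a * (1 + b * D)) := by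
      linear_combination (-t) * (1 + b * D) * hab
    rw [this]
    exact (h.mul_left _).add (dvd_mul_right _ _)
  refine ⟨C * b, hu, fun hq' => ht ?_⟩
  simpa using hu.sub (hq'.pow two_ne_zero)

lemma exists_sq_add_dvd_of_dvd_den_cayley {t : ℕ} {c d : ℚ} (hc : c ≠ 0) {q : ℕ} (hq : q.Prime)
    (ht : ¬ q ∣ t) (hden : q ∣ (cayleyRe (t : ℚ) c d).den ∨ q ∣ (cayleyIm (t : ℚ) c d).den) :
    ∃ u : ℤ, (q : ℤ) ∣ u ^ 2 + t ∧ ¬ (q : ℤ) ∣ u := by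
  set r := d / c
  have hcop : IsCoprime (r.den : ℤ) r.num := by
    rw [Int.isCoprime_iff_gcd_eq_one, Int.gcd_comm]
    exact r.reduced
  have hs : c / r.den ≠ 0 := div_ne_zero hc (by exact_mod_cast r.den_nz)
  have hcd : c = c / r.den * r.den ∧ d = c / r.den * r.num := by
    refine ⟨by field_simp, ?_⟩
    rw [div_mul_eq_mul_div, mul_div_assoc, Rat.num_div_den, mul_div_cancel₀ _ hc]
  have hdvd : ∀ n : ℤ, q ∣ ((n : ℚ) / ((r.den ^ 2 + t * r.num ^ 2 : ℤ) : ℚ)).den →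
      (q : ℤ) ∣ r.den ^ 2 + t * r.num ^ 2 := fun n hn =>
    (Int.natCast_dvd_natCast.2 hn).trans (Rat.divInt_eq_div n _ ▸ Rat.den_dvd _ _)
  refine Int.exists_sq_add_dvd_of_dvd_sq_add_mul_sq (Nat.prime_iff_prime_int.1 hq) hcop ?_
    (by exact_mod_cast ht)
  rw [hcd.1, hcd.2, cayleyRe_mul_mul hs, cayleyIm_mul_mul hs] at hden
  rcases hden with h | h
  · exact hdvd (r.den ^ 2 - t * r.num ^ 2) (by push_cast [cayleyRe] at h ⊢; exact h)
  · exact hdvd (2 * r.den * r.num) (by push_cast [cayleyIm] at h ⊢; exact h)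

section Ultrametric

open IsUltrametricDist

variable {K : Type*} [NormedField K] [IsUltrametricDist K]

lemma norm_eq_one_of_norm_sub_one_lt_one {x : K} (h : ‖x - 1‖ < 1) : ‖x‖ = 1 := by
  have := norm_add_eq_max_of_norm_ne_norm (h.trans_eq norm_one.symm).ne
  rwa [sub_add_cancel, norm_one, max_eq_right h.le] at this

lemma norm_div_mul_inv_sub_one_le {a u w : K} {δ : ℝ} (ha : a ≠ 0) (hu : ‖u - a‖ ≤ δ * ‖a‖)
    (hw : ‖w - 1‖ < 1) (hwδ : ‖w - 1‖ ≤ δ) : ‖u / w * a⁻¹ - 1‖ ≤ δ := by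
  have hw1 := norm_eq_one_of_norm_sub_one_lt_one hw
  have hw0 : w ≠ 0 := norm_ne_zero_iff.1 (hw1.trans_ne one_ne_zero)
  have ha' : 0 < ‖a‖ := norm_pos_iff.2 ha
  rw [show u / w * a⁻¹ - 1 = ((u - a) + -(a * (w - 1))) / (a * w) by field_simp; ring,
    norm_div, norm_mul, hw1, mul_one, div_le_iff₀ ha']
  refine (norm_add_le_max _ _).trans (max_le hu ?_)
  rw [norm_neg, norm_mul, mul_comm]
  exact mul_le_mul_of_nonneg_right hwδ ha'.le

lemma norm_cayley_mul_inv_sub_one_le {t ζ a c d : K} {δ : ℝ} (hζ : ζ ^ 2 = -t) (hζ1 : ‖ζ‖ = 1)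
    (h2 : (2 : K) ≠ 0) (ha : a ≠ 0) (hδ : δ ≤ 1) (hden : c ^ 2 + t * d ^ 2 ≠ 0)
    (hc : ‖c - (a + 1) / 2‖ ≤ δ * min (1 / 2) ‖a‖)
    (hd : ‖d - (a - 1) / (2 * ζ)‖ ≤ δ * min (1 / 2) ‖a‖) :
    ‖(cayleyRe t c d + cayleyIm t c d * ζ) * a⁻¹ - 1‖ ≤ δ := by
  have hζ0 : ζ ≠ 0 := norm_ne_zero_iff.1 (hζ1.trans_ne one_ne_zero)
  have hm : 0 < min (1 / 2) ‖a‖ := lt_min one_half_pos (norm_pos_iff.2 ha)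
  have hδ0 : 0 ≤ δ := nonneg_of_mul_nonneg_left ((norm_nonneg _).trans hc) hm
  have herr : ∀ s : K, ‖s‖ = 1 →
      ‖(c - (a + 1) / 2) + (d - (a - 1) / (2 * ζ)) * s‖ ≤ δ * min (1 / 2) ‖a‖ := fun s hs =>
    (norm_add_le_max _ _).trans (max_le hc (by rwa [norm_mul, hs, mul_one]))
  have hu : ‖c + d * ζ - a‖ ≤ δ * ‖a‖ := by
    refine le_trans (le_of_eq ?_) ((herr ζ hζ1).trans (by gcongr; exact min_le_right _ _))
    congr 1; field_simp; ring
  have hw : ‖c - d * ζ - 1‖ ≤ δ * (1 / 2) := by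
    refine le_trans (le_of_eq ?_) ((herr (-ζ) (by rwa [norm_neg])).trans
      (by gcongr; exact min_le_left _ _))
    congr 1; field_simp; ring
  rw [cayleyRe_add_cayleyIm_mul hζ hden]
  exact norm_div_mul_inv_sub_one_le ha hu (by linarith) (by linarith)

lemma norm_cayley_le_one {t c d : K} (ht : ‖t‖ ≤ 1) (hc : ‖c - 1‖ < 1) (hd : ‖d‖ < 1) :
    ‖cayleyRe t c d‖ ≤ 1 ∧ ‖cayleyIm t c d‖ ≤ 1 := by
  have hc1 : ‖c ^ 2‖ = 1 := by rw [norm_pow, norm_eq_one_of_norm_sub_one_lt_one hc, one_pow]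
  have htd : ‖t * d ^ 2‖ < 1 := by
    rw [norm_mul, norm_pow]
    nlinarith [norm_nonneg t, norm_nonneg d]
  have hden : ‖c ^ 2 + t * d ^ 2‖ = 1 := by
    rw [norm_add_eq_max_of_norm_ne_norm (hc1.trans_ne htd.ne'), hc1, max_eq_left htd.le]
  rw [cayleyRe, cayleyIm, norm_div, norm_div, hden, div_one, div_one, norm_mul, norm_mul,
    norm_eq_one_of_norm_sub_one_lt_one hc, mul_one]
  refine ⟨(sub_eq_add_neg (c ^ 2) _ ▸ norm_add_le_max _ _).trans
    (max_le hc1.le (by rw [norm_neg]; exact htd.le)), ?_⟩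
  have h2 : ‖(2 : K)‖ ≤ 1 := by exact_mod_cast IsUltrametricDist.norm_natCast_le_one K 2
  nlinarith [norm_nonneg (2 : K), norm_nonneg d]

end Ultrametric

lemma Ideal.natCast_notMem_of_natCast_mem {R : Type*} [CommRing R] {P : Ideal R} (hP : P ≠ ⊤)
    {q d : ℕ} (hq : q.Prime) (hqP : (q : R) ∈ P) (hd : ¬ q ∣ d) : (d : R) ∉ P := fun hdP => by
  obtain ⟨a, b, hab⟩ := (Nat.isCoprime_iff_coprime.2 ((hq.coprime_iff_not_dvd).2 hd)).map
    (Int.castRingHom R)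
  refine hP ((Ideal.eq_top_iff_one _).2 ?_)
  rw [← hab]
  simp only [eq_intCast, Int.cast_natCast]
  exact Ideal.add_mem _ (Ideal.mul_mem_left _ _ hqP) (Ideal.mul_mem_left _ _ hdP)

namespace IsDedekindDomain.HeightOneSpectrum

variable {R K : Type*} [CommRing R] [IsDedekindDomain R] [Field K] [Algebra R K]
  [IsFractionRing R K] [Algebra ℚ K] (v : HeightOneSpectrum R) {q : ℕ}

lemma valuation_algebraMap_rat_le_one (hq : q.Prime) (hqv : (q : R) ∈ v.asIdeal) {x : ℚ}
    (hx : ¬ q ∣ x.den) : v.valuation K (algebraMap ℚ K x) ≤ 1 := by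
  have hden : v.valuation K (algebraMap R K x.den) = 1 := by
    rw [valuation_of_algebraMap, intValuation_eq_one_iff]
    exact Ideal.natCast_notMem_of_natCast_mem v.isPrime.ne_top hq hqv hx
  rw [eq_ratCast, Rat.cast_def, map_div₀, ← map_natCast (algebraMap R K), hden, div_one,
    ← map_intCast (algebraMap R K)]
  exact v.valuation_le_one _

lemma valuation_add_smul_eq_one (hq : q.Prime) (hqv : (q : R) ∈ v.asIdeal) {x y t : ℚ}
    (hx : ¬ q ∣ x.den) (hy : ¬ q ∣ y.den) (ht : ¬ q ∣ t.den) (hxy : x ^ 2 + t * y ^ 2 = 1)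
    {ρ : K} (hρ : ρ ^ 2 = algebraMap ℚ K (-t)) :
    v.valuation K (algebraMap ℚ K x + y • ρ) = 1 := by
  have hρ1 : v.valuation K ρ ≤ 1 := by
    refine (pow_le_one_iff two_ne_zero).1 ?_
    rw [← map_pow, hρ, map_neg, Valuation.map_neg]
    exact v.valuation_algebraMap_rat_le_one hq hqv ht
  have hle : ∀ s : ℚ, ¬ q ∣ s.den → v.valuation K (algebraMap ℚ K x + s • ρ) ≤ 1 := by
    refine fun s hs => (Valuation.map_add _ _ _).trans
      (max_le (v.valuation_algebraMap_rat_le_one hq hqv hx) ?_)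
    rw [Algebra.smul_def, map_mul]
    exact mul_le_one' (v.valuation_algebraMap_rat_le_one hq hqv hs) hρ1
  have hconj : (algebraMap ℚ K x + y • ρ) * (algebraMap ℚ K x + (-y) • ρ) = 1 := by
    have h := congrArg (algebraMap ℚ K) hxy
    simp only [map_add, map_mul, map_pow, map_one, map_neg] at h hρ
    simp only [Algebra.smul_def, map_neg]
    linear_combination h - (algebraMap ℚ K y) ^ 2 * hρ
  refine le_antisymm (hle y hy) ?_
  calc 1 = v.valuation K (algebraMap ℚ K x + y • ρ) *
        v.valuation K (algebraMap ℚ K x + (-y) • ρ) := by rw [← map_mul, hconj, map_one]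
    _ ≤ v.valuation K (algebraMap ℚ K x + y • ρ) * 1 :=
        mul_le_mul' le_rfl (hle (-y) (by rwa [Rat.neg_den]))
    _ = _ := mul_one _

end IsDedekindDomain.HeightOneSpectrum

lemma Padic.not_dvd_den_of_norm_le_one {p : ℕ} [Fact p.Prime] {x : ℚ} (h : ‖(x : ℚ_[p])‖ ≤ 1) :
    ¬ p ∣ x.den :=
  Rat.padicValuation_le_one_iff.1 ((Padic.norm_rat_le_one_iff_padicValuation_le_one p).1 h)

section SqrtNeg

variable {t p : ℕ} [Fact p.Prime]

lemma sqrtNeg_sq_of_dvd_add_one (hp2 : p ≠ 2) (h : p ∣ t + 1) : sqrtNeg t p ^ 2 = -t := by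
  refine sqrtNeg_sq ?_
  obtain ⟨z, hz⟩ := PadicInt.exists_sq_eq_neg_of_dvd hp2 (t := t) (u := 1)
    (by simpa [add_comm] using Int.natCast_dvd_natCast.2 h)
    (by exact_mod_cast (Fact.out : p.Prime).not_dvd_one)
  exact ⟨z, by simpa using hz⟩

lemma norm_sqrtNeg_of_dvd_add_one (hp2 : p ≠ 2) (h : p ∣ t + 1) :
    ‖(sqrtNeg t p : ℚ_[p])‖ = 1 := by
  have ht : ‖(t : ℚ_[p])‖ = 1 := by
    rw [Padic.norm_natCast_eq_one_iff, (Fact.out : p.Prime).coprime_iff_not_dvd]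
    exact fun ht => (Fact.out : p.Prime).not_dvd_one ((Nat.dvd_add_right ht).1 h)
  have : ‖(sqrtNeg t p : ℚ_[p])‖ ^ 2 = 1 := by
    rw [← norm_pow, ← PadicInt.coe_pow, sqrtNeg_sq_of_dvd_add_one hp2 h]
    simpa using ht
  nlinarith [norm_nonneg (sqrtNeg t p : ℚ_[p])]

end SqrtNeg

lemma exists_one_lt_forall_dvd_add_one (P : Finset ℕ) (hP : ∀ p ∈ P, 0 < p) :
    ∃ t : ℕ, 1 < t ∧ ∀ p ∈ P, p ∣ t + 1 := by
  have : 0 < ∏ p ∈ P, p := Finset.prod_pos hP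
  refine ⟨3 * ∏ p ∈ P, p - 1, by omega, fun p hp => ?_⟩
  rw [Nat.sub_add_cancel (by omega)]
  exact (Finset.dvd_prod_of_mem _ hp).mul_left 3

lemma exists_rat_pair_near (P X : Finset ℕ) (hP : ∀ p ∈ P, p.Prime) (hX : ∀ q ∈ X, q.Prime)
    (hPX : Disjoint P X) (hXne : X.Nonempty) (b b' : ∀ (p : ℕ) [Fact p.Prime], ℚ_[p])
    (ε : ∀ (p : ℕ) [Fact p.Prime], ℝ) (hε : ∀ p ∈ P, ∀ [Fact p.Prime], 0 < ε p) :
    ∃ c d : ℚ, c ≠ 0 ∧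
      (∀ p ∈ P, ∀ [Fact p.Prime], ‖(c : ℚ_[p]) - b p‖ ≤ ε p ∧ ‖(d : ℚ_[p]) - b' p‖ ≤ ε p) ∧
      ∀ q ∈ X, ∀ [Fact q.Prime], ‖(c : ℚ_[q]) - 1‖ < 1 ∧ ‖(d : ℚ_[q])‖ < 1 := by
  classical
  have hW : ∀ p ∈ P ∪ X, p.Prime := fun p hp =>
    (Finset.mem_union.1 hp).elim (hP p) (hX p)
  have hε' : ∀ p ∈ P ∪ X, ∀ [Fact p.Prime], 0 < if p ∈ P then ε p else 1 / 2 := fun p _ _ => by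
    split_ifs with h
    exacts [hε p h, one_half_pos]
  obtain ⟨c, hc⟩ := Rat.exists_forall_norm_sub_le (P ∪ X) hW
    (fun p _ => if p ∈ P then b p else 1) _ hε'
  obtain ⟨d, hd⟩ := Rat.exists_forall_norm_sub_le (P ∪ X) hW
    (fun p _ => if p ∈ P then b' p else 0) _ hε'
  have hcdX : ∀ q ∈ X, ∀ [Fact q.Prime], ‖(c : ℚ_[q]) - 1‖ < 1 ∧ ‖(d : ℚ_[q])‖ < 1 := by
    intro q hq _
    have hqP : q ∉ P := Finset.disjoint_right.1 hPX hq
    have hc := hc q (Finset.mem_union_right _ hq)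
    have hd := hd q (Finset.mem_union_right _ hq)
    simp only [if_neg hqP, sub_zero] at hc hd
    constructor <;> linarith
  refine ⟨c, d, ?_, fun p hp _ => ?_, hcdX⟩
  · obtain ⟨q, hq⟩ := hXne
    have := Fact.mk (hX q hq)
    rintro rfl
    simpa using (hcdX q hq).1
  · have hc := hc p (Finset.mem_union_left _ hp)
    have hd := hd p (Finset.mem_union_left _ hp)
    simp only [if_pos hp] at hc hd
    exact ⟨hc, hd⟩

theorem exists_cayley_approx (a : ℚ) (ha : a ≠ 0) {t : ℕ} (P X : Finset ℕ) (E : ℕ → ℕ)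
    (hP : ∀ p ∈ P, p.Prime ∧ p ≠ 2 ∧ p ∣ t + 1) (hX : ∀ q ∈ X, q.Prime) (hPX : Disjoint P X)
    (hXne : X.Nonempty) :
    ∃ c d : ℚ, c ≠ 0 ∧
      (∀ p ∈ P, ∀ [Fact p.Prime], ‖((cayleyRe t c d : ℚ) + (cayleyIm t c d : ℚ) *
        (sqrtNeg t p : ℚ_[p])) * (a : ℚ_[p])⁻¹ - 1‖ ≤ (p : ℝ) ^ (-(E p : ℤ))) ∧
      ∀ q ∈ X, ¬ q ∣ (cayleyRe (t : ℚ) c d).den ∧ ¬ q ∣ (cayleyIm (t : ℚ) c d).den := by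
  have hpow : ∀ (p : ℕ) [Fact p.Prime], (p : ℝ) ^ (-(E p : ℤ)) ≤ 1 := fun p _ =>
    zpow_le_one_of_nonpos₀ (by exact_mod_cast (Fact.out : p.Prime).one_le) (by omega)
  obtain ⟨c, d, hc0, hP', hX'⟩ := exists_rat_pair_near P X (fun p hp => (hP p hp).1) hX hPX hXne
    (fun p _ => ((a : ℚ_[p]) + 1) / 2) (fun p _ => ((a : ℚ_[p]) - 1) / (2 * sqrtNeg t p))
    (fun p _ => (p : ℝ) ^ (-(E p : ℤ)) * min (1 / 2) ‖(a : ℚ_[p])‖) (fun p _ _ => by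
      have : (a : ℚ_[p]) ≠ 0 := by exact_mod_cast ha
      have := (Fact.out : p.Prime).pos
      positivity)
  have hden : c ^ 2 + t * d ^ 2 ≠ 0 := by positivity
  refine ⟨c, d, hc0, fun p hp _ => ?_, fun q hq => ?_⟩
  · obtain ⟨-, hp2, hpt⟩ := hP p hp
    push_cast
    exact norm_cayley_mul_inv_sub_one_le
      (by simpa using congrArg ((↑) : ℤ_[p] → ℚ_[p]) (sqrtNeg_sq_of_dvd_add_one hp2 hpt))
      (norm_sqrtNeg_of_dvd_add_one hp2 hpt) two_ne_zero (by exact_mod_cast ha) (hpow p)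
      (by exact_mod_cast hden) (hP' p hp).1 (hP' p hp).2
  · have := Fact.mk (hX q hq)
    have h := norm_cayley_le_one (t := (t : ℚ_[q]))
      (by exact_mod_cast Padic.norm_int_le_one (t : ℤ)) (hX' q hq).1 (hX' q hq).2
    exact ⟨Padic.not_dvd_den_of_norm_le_one (by simpa using h.1),
      Padic.not_dvd_den_of_norm_le_one (by simpa using h.2)⟩

theorem exists_norm_one_approx (a : ℚ) (ha : a ≠ 0) {t : ℕ} (ht : t ≠ 0) (P X : Finset ℕ)
    (E : ℕ → ℕ) (hP : ∀ p ∈ P, p.Prime ∧ p ≠ 2 ∧ p ∣ t + 1) (hX : ∀ q ∈ X, q.Prime)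
    (hPX : Disjoint P X) (htX : t.primeFactors ⊆ X) (hXne : X.Nonempty) :
    ∃ (x y : ℚ) (R : Finset ℕ), x ^ 2 + t * y ^ 2 = 1 ∧
      (∀ p ∈ P, ∀ [Fact p.Prime],
        ‖((x : ℚ_[p]) + y * sqrtNeg t p) * (a : ℚ_[p])⁻¹ - 1‖ ≤ (p : ℝ) ^ (-(E p : ℤ))) ∧
      (∀ q ∈ R, q.Prime ∧ q ≠ 2 ∧ q ∉ P ∧ q ∉ X ∧ ∀ [Fact q.Prime], sqrtNeg t q ^ 2 = -t) ∧
      ∀ q, q.Prime → q ≠ 2 → q ∉ P → q ∉ R → ¬ q ∣ x.den ∧ ¬ q ∣ y.den := by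
  classical
  obtain ⟨c, d, hc0, happ, hint⟩ := exists_cayley_approx a ha P X E hP hX hPX hXne
  set x := cayleyRe (t : ℚ) c d
  set y := cayleyIm (t : ℚ) c d
  refine ⟨x, y, (x.den * y.den).primeFactors.filter (fun q => q ≠ 2 ∧ q ∉ P),
    cayleyRe_sq_add_mul_cayleyIm_sq (by positivity), happ, fun q hq => ?_,
    fun q hq hq2 hqP hqR => ?_⟩
  · simp only [Finset.mem_filter, Nat.mem_primeFactors] at hq
    obtain ⟨⟨hq, hqd, -⟩, hq2, hqP⟩ := hq
    have hqd : q ∣ x.den ∨ q ∣ y.den := hq.dvd_mul.1 hqd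
    have hqX : q ∉ X := fun h => hqd.elim (hint q h).1 (hint q h).2
    refine ⟨hq, hq2, hqP, hqX, ?_⟩
    intro _
    have hqt : ¬ q ∣ t := fun h => hqX (htX (Nat.mem_primeFactors.2 ⟨hq, h, ht⟩))
    obtain ⟨u, hu, hu'⟩ := exists_sq_add_dvd_of_dvd_den_cayley hc0 hq hqt hqd
    exact sqrtNeg_sq (by simpa using PadicInt.exists_sq_eq_neg_of_dvd hq2 hu hu')
  · have hden : x.den * y.den ≠ 0 := mul_ne_zero x.den_nz y.den_nz
    have : ¬ q ∣ x.den * y.den := fun h =>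
      hqR (Finset.mem_filter.2 ⟨Nat.mem_primeFactors.2 ⟨hq, h, hden⟩, hq2, hqP⟩)
    exact ⟨fun h => this (h.mul_right _), fun h => this (h.mul_left _)⟩

theorem exists_norm_one_pair (a₁ a₂ : ℚ) (ha₁ : a₁ ≠ 0) (ha₂ : a₂ ≠ 0) (P : Finset ℕ)
    (E : ℕ → ℕ) (hP : ∀ p ∈ P, p.Prime ∧ p ≠ 2) :
    ∃ (t : ℕ) (x₁ y₁ x₂ y₂ : ℚ) (R₁ R₂ : Finset ℕ), 1 < t ∧
      x₁ ^ 2 + t * y₁ ^ 2 = 1 ∧ x₂ ^ 2 + t * y₂ ^ 2 = 1 ∧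
      (∀ p ∈ R₁ ∪ R₂, p.Prime ∧ p ≠ 2) ∧
      (∀ p ∈ P ∪ (R₁ ∪ R₂), ∀ [Fact p.Prime], sqrtNeg t p ^ 2 = -t) ∧
      (∀ p ∈ P, ∀ [Fact p.Prime],
        ‖((x₁ : ℚ_[p]) + y₁ * sqrtNeg t p) * (a₁ : ℚ_[p])⁻¹ - 1‖ ≤ (p : ℝ) ^ (-(E p : ℤ)) ∧
        ‖((x₂ : ℚ_[p]) + y₂ * sqrtNeg t p) * (a₂ : ℚ_[p])⁻¹ - 1‖ ≤ (p : ℝ) ^ (-(E p : ℤ))) ∧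
      Disjoint P R₁ ∧ Disjoint P R₂ ∧ Disjoint R₁ R₂ ∧ (∀ p ∈ P ∪ (R₁ ∪ R₂), ¬ p ∣ t) ∧
      ∀ q, q.Prime → q ≠ 2 → q ∉ P →
        (q ∉ R₁ → ¬ q ∣ x₁.den ∧ ¬ q ∣ y₁.den) ∧ (q ∉ R₂ → ¬ q ∣ x₂.den ∧ ¬ q ∣ y₂.den) := by
  obtain ⟨t, ht, hPt⟩ := exists_one_lt_forall_dvd_add_one P fun p hp => (hP p hp).1.pos
  have hP' : ∀ p ∈ P, p.Prime ∧ p ≠ 2 ∧ p ∣ t + 1 := fun p hp =>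
    ⟨(hP p hp).1, (hP p hp).2, hPt p hp⟩
  have hPt' : Disjoint P t.primeFactors := Finset.disjoint_left.2 fun p hp h =>
    (hP p hp).1.not_dvd_one ((Nat.dvd_add_right (Nat.dvd_of_mem_primeFactors h)).1 (hPt p hp))
  obtain ⟨x₁, y₁, R₁, hxy₁, happ₁, hR₁, hden₁⟩ := exists_norm_one_approx a₁ ha₁
    (by omega) P t.primeFactors E hP' (fun q => Nat.prime_of_mem_primeFactors) hPt' subset_rfl
    (Nat.nonempty_primeFactors.2 ht)
  obtain ⟨x₂, y₂, R₂, hxy₂, happ₂, hR₂, hden₂⟩ := exists_norm_one_approx a₂ ha₂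
    (by omega) P (t.primeFactors ∪ R₁) E hP'
    (fun q hq => (Finset.mem_union.1 hq).elim Nat.prime_of_mem_primeFactors fun h => (hR₁ q h).1)
    (Finset.disjoint_union_right.2 ⟨hPt', Finset.disjoint_right.2 fun q hq => (hR₁ q hq).2.2.1⟩)
    Finset.subset_union_left (Nat.nonempty_primeFactors.2 ht |>.mono Finset.subset_union_left)
  have hR : ∀ p ∈ R₁ ∪ R₂, p.Prime ∧ p ≠ 2 ∧ p ∉ t.primeFactors ∧
      ∀ [Fact p.Prime], sqrtNeg t p ^ 2 = -t := fun p hp => (Finset.mem_union.1 hp).elim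
    (fun h => ⟨(hR₁ p h).1, (hR₁ p h).2.1, (hR₁ p h).2.2.2⟩)
    (fun h => ⟨(hR₂ p h).1, (hR₂ p h).2.1, fun h' => (hR₂ p h).2.2.2.1 (Finset.mem_union_left _ h'),
      (hR₂ p h).2.2.2.2⟩)
  refine ⟨t, x₁, y₁, x₂, y₂, R₁, R₂, ht, hxy₁, hxy₂, fun p hp => ⟨(hR p hp).1, (hR p hp).2.1⟩,
    fun p hp _ => ?_, fun p hp _ => ⟨happ₁ p hp, happ₂ p hp⟩,
    Finset.disjoint_right.2 fun p hp => (hR₁ p hp).2.2.1,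
    Finset.disjoint_right.2 fun p hp => (hR₂ p hp).2.2.1,
    Finset.disjoint_left.2 fun p hp h => (hR₂ p h).2.2.2.1 (Finset.mem_union_right _ hp),
    fun p hp hpt => ?_, fun q hq hq2 hqP => ⟨hden₁ q hq hq2 hqP, hden₂ q hq hq2 hqP⟩⟩
  · rcases Finset.mem_union.1 hp with hp | hp
    · exact sqrtNeg_sq_of_dvd_add_one (hP p hp).2 (hPt p hp)
    · exact (hR p hp).2.2.2
  · rcases Finset.mem_union.1 hp with hp | hp
    · exact Finset.disjoint_left.1 hPt' hp (Nat.mem_primeFactors.2 ⟨(hP p hp).1, hpt, by omega⟩)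
    · exact (hR p hp).2.2.1 (Nat.mem_primeFactors.2 ⟨(hR p hp).1, hpt, by omega⟩)

theorem stmt15 (a₁ a₂ : ℚ) (ha₁ : a₁ ≠ 0) (ha₂ : a₂ ≠ 0)
    (I : Ideal ↥Zhalf) (hI : I ≠ ⊥) :
    ∃ (t : ↥Zhalf) (x₁ y₁ x₂ y₂ : ℚ) (R₁ R₂ : Finset ℕ)
      (ζ : ∀ (p : ℕ) (hp : p.Prime), @PadicInt p ⟨hp⟩),
      0 < (t : ℚ) ∧
      x₁ ^ 2 + (t : ℚ) * y₁ ^ 2 = 1 ∧ x₂ ^ 2 + (t : ℚ) * y₂ ^ 2 = 1 ∧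
      (∀ p ∈ R₁, Nat.Prime p ∧ p ≠ 2) ∧ (∀ p ∈ R₂, Nat.Prime p ∧ p ≠ 2) ∧
      -- the given square roots of `−t` over the primes in `P(I) ∪ R₁ ∪ R₂`
      (∀ (p : ℕ) (hp : p.Prime), p ≠ 2 →
        (I ≤ Ideal.span {(p : ↥Zhalf)} ∨ p ∈ R₁ ∨ p ∈ R₂) →
        letI : Fact p.Prime := ⟨hp⟩
        (ζ p hp : ℚ_[p]) ^ 2 = -(((t : ℚ) : ℚ_[p]))) ∧
      -- (1): for `i = 1,2` and every `p ∈ P(I)`, `v_p((xᵢ + yᵢ ζ_p) aᵢ⁻¹ − 1) ≥ v_p(I)`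
      (∀ (p : ℕ) (hp : p.Prime), p ≠ 2 → I ≤ Ideal.span {(p : ↥Zhalf)} →
        letI : Fact p.Prime := ⟨hp⟩
        ∀ e : ℕ, I ≤ Ideal.span {(p : ↥Zhalf)} ^ e →
          ‖((x₁ : ℚ_[p]) + (y₁ : ℚ_[p]) * (ζ p hp : ℚ_[p])) * ((a₁ : ℚ_[p]))⁻¹ - 1‖
              ≤ (p : ℝ) ^ (-(e : ℤ)) ∧
          ‖((x₂ : ℚ_[p]) + (y₂ : ℚ_[p]) * (ζ p hp : ℚ_[p])) * ((a₂ : ℚ_[p]))⁻¹ - 1‖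
              ≤ (p : ℝ) ^ (-(e : ℤ))) ∧
      -- (2): the sets `P(I)`, `R₁`, `R₂`, `P(t)` are pairwise disjoint
      (∀ p : ℕ, p.Prime → p ≠ 2 →
        (I ≤ Ideal.span {(p : ↥Zhalf)} → p ∉ R₁) ∧
        (I ≤ Ideal.span {(p : ↥Zhalf)} → p ∉ R₂) ∧
        (I ≤ Ideal.span {(p : ↥Zhalf)} → ¬ 0 < padicValRat p (t : ℚ)) ∧
        (p ∈ R₁ → p ∉ R₂) ∧
        (p ∈ R₁ → ¬ 0 < padicValRat p (t : ℚ)) ∧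
        (p ∈ R₂ → ¬ 0 < padicValRat p (t : ℚ))) ∧
      -- (3): in `L = ℚ(√−t)` with `zᵢ = xᵢ + yᵢ √−t`, for every odd prime
      -- `q ∉ P(I) ∪ Rᵢ` and every prime `𝔮` of the ring of integers of `L` over `q`,
      -- the `𝔮`-adic valuation of `zᵢ` is `0`
      (∀ (L : Type) (_ : Field L) (_ : NumberField L) (_ : Algebra ℚ L) (ρ : L),
        ρ ^ 2 = algebraMap ℚ L (-(t : ℚ)) →
        (∀ z : L, z ∈ Algebra.adjoin ℚ {ρ}) →
        ∀ (q : ℕ), q.Prime → q ≠ 2 →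
          ∀ 𝔮 : IsDedekindDomain.HeightOneSpectrum (NumberField.RingOfIntegers L),
            ((q : NumberField.RingOfIntegers L) ∈ 𝔮.asIdeal) →
            ((¬ I ≤ Ideal.span {(q : ↥Zhalf)} → q ∉ R₁ →
                𝔮.valuation L (algebraMap ℚ L x₁ + y₁ • ρ) = 1) ∧
             (¬ I ≤ Ideal.span {(q : ↥Zhalf)} → q ∉ R₂ →
                𝔮.valuation L (algebraMap ℚ L x₂ + y₂ • ρ) = 1))) := by
  obtain ⟨P, E, hP, hE⟩ := Zhalf.exists_primes_and_bound_of_ne_bot I hI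
  have hPI : ∀ p : ℕ, p.Prime → p ≠ 2 → (p ∈ P ↔ I ≤ Ideal.span {(p : Zhalf)}) :=
    fun p hp hp2 => by simp [hP, hp, hp2]
  obtain ⟨t, x₁, y₁, x₂, y₂, R₁, R₂, ht, hxy₁, hxy₂, hR, hsq, happ, hPR₁, hPR₂, hR₁₂, hPt, hden⟩ :=
    exists_norm_one_pair a₁ a₂ ha₁ ha₂ P E fun p hp => ⟨((hP p).1 hp).1, ((hP p).1 hp).2.1⟩
  have htQ : ((t : Zhalf) : ℚ) = t := by norm_cast
  have hval : ∀ p ∈ P ∪ (R₁ ∪ R₂), ¬ 0 < padicValRat p ((t : Zhalf) : ℚ) := fun p hp => by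
    simp [htQ, padicValRat.of_nat, padicValNat.eq_zero_of_not_dvd (hPt p hp)]
  refine ⟨t, x₁, y₁, x₂, y₂, R₁, R₂, fun p hp => @sqrtNeg t p ⟨hp⟩, by rw [htQ]; positivity,
    by rwa [htQ], by rwa [htQ], fun p hp => hR p (Finset.mem_union_left _ hp),
    fun p hp => hR p (Finset.mem_union_right _ hp), fun p hp hp2 h => ?_,
    fun p hp hp2 hle e he => ?_, fun p hp hp2 => ?_, ?_⟩
  · have := Fact.mk hp
    rw [htQ]
    rw [← hPI p hp hp2] at h
    simpa using congrArg ((↑) : ℤ_[p] → ℚ_[p]) (hsq p (by simpa using h))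
  · have := Fact.mk hp
    have hmono : (p : ℝ) ^ (-(E p : ℤ)) ≤ (p : ℝ) ^ (-(e : ℤ)) :=
      zpow_le_zpow_right₀ (by exact_mod_cast hp.one_le) (by have := hE p e hp hp2 he; omega)
    obtain ⟨h₁, h₂⟩ := happ p ((hPI p hp hp2).2 hle)
    exact ⟨h₁.trans hmono, h₂.trans hmono⟩
  · rw [← hPI p hp hp2]
    exact ⟨(Finset.disjoint_left.1 hPR₁ ·), (Finset.disjoint_left.1 hPR₂ ·),
      fun h => hval p (by simp [h]), (Finset.disjoint_left.1 hR₁₂ ·), fun h => hval p (by simp [h]),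
      fun h => hval p (by simp [h])⟩
  · intro L _ _ _ ρ hρ _ q hq hq2 𝔮 hq𝔮
    rw [htQ] at hρ
    rw [← hPI q hq hq2]
    have htden : ¬ q ∣ (t : ℚ).den := by simp [hq.ne_one]
    refine ⟨fun hqP hqR => ?_, fun hqP hqR => ?_⟩
    · obtain ⟨hx, hy⟩ := (hden q hq hq2 hqP).1 hqR
      exact 𝔮.valuation_add_smul_eq_one hq hq𝔮 hx hy htden hxy₁ hρ
    · obtain ⟨hx, hy⟩ := (hden q hq hq2 hqP).2 hqR
      exact 𝔮.valuation_add_smul_eq_one hq hq𝔮 hx hy htden hxy₂ hρ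
end
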